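/- arXiv:1406.3081 — 7 statements merged into one kernel-verified Lean document; each statement's English description precedes it below -/
import Mathlib

section
/- Let n, m be natural numbers with m ≥ 2 and n ≥ 2m−1, and let β be an m-cycle in S_n. Then the number of permutations α ∈ S_n that 2m-commute with β equals m!·(n−m)!·C(n−m, m), where C(a,b) denotes the binomial coefficient. -/
/-- The Hamming metric between two permutations of `Fin n`. -/
def hamming {n : ℕ} (f g : Equiv.Perm (Fin n)) : ℕ :=
  (Finset.univ.filter fun a : Fin n => f a ≠ g a).card

/-- `kcomm k β` is the number of permutations `α` that `k`-commute with `β`,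
i.e. with `H(αβ, βα) = k`. -/
def kcomm {n : ℕ} (k : ℕ) (β : Equiv.Perm (Fin n)) : ℕ :=
  (Finset.univ.filter fun α : Equiv.Perm (Fin n) =>
    hamming (α * β) (β * α) = k).card

open Finset Equiv

variable {α : Type*} [Fintype α] [DecidableEq α]

/-- Glue an equiv on a set and an equiv on its complement into a permutation. -/
def glue (A B : Finset α) (e : {x // x ∈ A} ≃ {x // x ∈ B})
    (f : {x // x ∉ A} ≃ {x // x ∉ B}) : Equiv.Perm α :=
  (Equiv.sumCompl (· ∈ A)).symm.trans ((e.sumCongr f).trans (Equiv.sumCompl (· ∈ B)))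

lemma glue_apply_mem (A B : Finset α) (e : {x // x ∈ A} ≃ {x // x ∈ B})
    (f : {x // x ∉ A} ≃ {x // x ∉ B}) (x : α) (hx : x ∈ A) :
    glue A B e f x = (e ⟨x, hx⟩ : α) := by
  simp [glue, Equiv.sumCompl_symm_apply_of_pos (p := (· ∈ A)) hx]

lemma glue_apply_not_mem (A B : Finset α) (e : {x // x ∈ A} ≃ {x // x ∈ B})
    (f : {x // x ∉ A} ≃ {x // x ∉ B}) (x : α) (hx : x ∉ A) :
    glue A B e f x = (f ⟨x, hx⟩ : α) := by
  simp [glue, Equiv.sumCompl_symm_apply_of_neg (p := (· ∈ A)) hx]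

set_option linter.unusedSectionVars false

lemma card_perm_map_eq (A B : Finset α) (h : A.card = B.card) :
    (Finset.univ.filter fun σ : Equiv.Perm α => A.map σ.toEmbedding = B).card
      = A.card.factorial * (Fintype.card α - A.card).factorial := by
  have hmemB : ∀ (σ : Equiv.Perm α), A.map σ.toEmbedding = B →
      ∀ x : α, x ∈ A ↔ σ x ∈ B := by
    intro σ hσ x
    constructor
    · intro hx; rw [← hσ]; exact Finset.mem_map_of_mem _ hx
    · intro hx; rw [← hσ] at hx
      obtain ⟨a, ha, hax⟩ := Finset.mem_map.mp hx
      have : a = x := σ.injective hax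
      rwa [← this]
  have ecompl : {x // x ∉ A} ≃ {x // x ∉ B} :=
    (Equiv.subtypeEquivRight (fun x => (Finset.mem_compl (s := A)).symm)).trans
      (((Finset.equivOfCardEq (by simp [Finset.card_compl, h]) : (Aᶜ : Finset α) ≃ (Bᶜ : Finset α))).trans
        (Equiv.subtypeEquivRight (fun x => Finset.mem_compl (s := B))))
  rw [← Fintype.card_coe A, ← Fintype.card_equiv (Finset.equivOfCardEq h),
    ← Fintype.card_subtype_compl, ← Fintype.card_equiv ecompl, ← Fintype.card_prod,
    ← Finset.card_univ]
  refine Finset.card_bij'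
    (fun σ hσ =>
      (⟨fun a => ⟨σ a, ((hmemB σ (by simpa using hσ) a).mp a.2)⟩,
        fun b => ⟨σ⁻¹ b, by
          have := (hmemB σ (by simpa using hσ) (σ⁻¹ b)).mpr (by simpa using b.2)
          exact this⟩,
        fun a => by simp, fun b => by simp⟩,
       ⟨fun a => ⟨σ a, fun hb => a.2 ((hmemB σ (by simpa using hσ) a).mpr hb)⟩,
        fun b => ⟨σ⁻¹ b, fun ha => b.2 (by
          have := (hmemB σ (by simpa using hσ) (σ⁻¹ b)).mp ha
          simpa using this)⟩,
        fun a => by simp, fun b => by simp⟩))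
    (fun p _ => glue A B p.1 p.2) (fun σ hσ => Finset.mem_univ _) ?_ ?_ ?_
  · intro p hp
    simp only [Finset.mem_filter, Finset.mem_univ, true_and]
    ext b
    simp only [Finset.mem_map, Equiv.coe_toEmbedding]
    constructor
    · rintro ⟨a, ha, rfl⟩
      rw [glue_apply_mem A B p.1 p.2 a ha]
      exact (p.1 ⟨a, ha⟩).2
    · intro hb
      refine ⟨p.1.symm ⟨b, hb⟩, (p.1.symm ⟨b, hb⟩).2, ?_⟩
      rw [glue_apply_mem A B p.1 p.2 _ (p.1.symm ⟨b, hb⟩).2]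
      simp
  · intro σ hσ
    ext x
    by_cases hx : x ∈ A
    · rw [glue_apply_mem A B _ _ x hx]; rfl
    · rw [glue_apply_not_mem A B _ _ x hx]; rfl
  · intro p hp
    ext x
    · show (glue A B p.1 p.2) ↑x = ↑(p.1 x)
      rw [glue_apply_mem A B p.1 p.2 _ x.2]
    · show (glue A B p.1 p.2) ↑x = ↑(p.2 x)
      rw [glue_apply_not_mem A B p.1 p.2 _ x.2]

lemma hamming_conj {n : ℕ} (a b : Equiv.Perm (Fin n)) :
    hamming (a * b) (b * a) = hamming (a * b * a⁻¹) b := by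
  unfold hamming
  apply Finset.card_nbij' (i := fun x => a x) (j := fun x => a⁻¹ x)
  · intro x hx
    have hx' := (Finset.mem_filter.mp hx).2
    exact Finset.mem_filter.mpr ⟨Finset.mem_univ _, by simpa using hx'⟩
  · intro x hx
    have hx' := (Finset.mem_filter.mp hx).2
    exact Finset.mem_filter.mpr ⟨Finset.mem_univ _, by simpa using hx'⟩
  · intro x _; simp
  · intro x _; simp

lemma diff_card_eq_iff {n m : ℕ} (γ β : Equiv.Perm (Fin n))
    (hγ : γ.support.card = m) (hβ : β.support.card = m) :
    (Finset.univ.filter fun x => γ x ≠ β x).card = 2 * m ↔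
      Disjoint γ.support β.support := by
  set D := Finset.univ.filter fun x => γ x ≠ β x with hD
  have hsub : D ⊆ γ.support ∪ β.support := by
    intro x hx
    simp only [hD, Finset.mem_filter, Finset.mem_univ, true_and] at hx
    by_contra h
    simp only [Finset.mem_union, Equiv.Perm.mem_support, not_or, not_not] at h
    exact hx (h.1.trans h.2.symm)
  constructor
  · intro h
    have h1 : 2 * m ≤ (γ.support ∪ β.support).card := h ▸ Finset.card_le_card hsub
    have h2 : (γ.support ∪ β.support).card ≤ 2 * m := by
      calc (γ.support ∪ β.support).card ≤ γ.support.card + β.support.card :=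
            Finset.card_union_le _ _
        _ = 2 * m := by rw [hγ, hβ]; ring
    exact Finset.card_union_eq_card_add_card.mp (by omega)
  · intro h
    have hDeq : D = γ.support ∪ β.support := by
      apply Finset.Subset.antisymm hsub
      intro x hx
      simp only [hD, Finset.mem_filter, Finset.mem_univ, true_and]
      rcases Finset.mem_union.mp hx with hx' | hx'
      · have : x ∉ β.support := Finset.disjoint_left.mp h hx'
        rw [Equiv.Perm.notMem_support] at this
        rw [this]
        exact Equiv.Perm.mem_support.mp hx'
      · have : x ∉ γ.support := Finset.disjoint_right.mp h hx'
        rw [Equiv.Perm.notMem_support] at this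
        rw [this]
        exact fun e => Equiv.Perm.mem_support.mp hx' e.symm
    rw [hDeq, Finset.card_union_of_disjoint h, hγ, hβ]; ring

theorem c_2m_of_m_cycle (n m : ℕ) (hm : 2 ≤ m) (hn : 2 * m - 1 ≤ n)
    (β : Equiv.Perm (Fin n)) (hβ : β.IsCycle ∧ β.support.card = m) :
    kcomm (2 * m) β =
      Nat.factorial m * Nat.factorial (n - m) * Nat.choose (n - m) m := by
  obtain ⟨-, hcard⟩ := hβ
  unfold kcomm
  have key : ∀ a : Equiv.Perm (Fin n),
      hamming (a * β) (β * a) = 2 * m ↔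
        β.support.map a.toEmbedding ∈
          Finset.powersetCard m (β.supportᶜ) := by
    intro a
    rw [hamming_conj]
    have hsupp : (a * β * a⁻¹).support = β.support.map a.toEmbedding :=
      Equiv.Perm.support_conj
    have hγcard : (a * β * a⁻¹).support.card = m := by
      rw [hsupp, Finset.card_map, hcard]
    rw [show hamming (a * β * a⁻¹) β =
        (Finset.univ.filter fun x => (a * β * a⁻¹) x ≠ β x).card from rfl,
      diff_card_eq_iff _ _ hγcard hcard, hsupp, Finset.mem_powersetCard]
    constructor
    · intro h
      exact ⟨fun x hx => Finset.mem_compl.mpr (Finset.disjoint_left.mp h hx),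
        by rw [Finset.card_map, hcard]⟩
    · intro ⟨h, _⟩
      exact Finset.disjoint_left.mpr fun x hx => Finset.mem_compl.mp (h hx)
  rw [Finset.filter_congr (fun a _ => by rw [key a])]
  rw [Finset.card_eq_sum_card_fiberwise
    (f := fun a : Equiv.Perm (Fin n) => β.support.map a.toEmbedding)
    (s := Finset.univ.filter fun a : Equiv.Perm (Fin n) =>
      β.support.map a.toEmbedding ∈ Finset.powersetCard m (β.supportᶜ))
    (t := Finset.powersetCard m (β.supportᶜ))
    (fun a ha => (Finset.mem_filter.mp (Finset.mem_coe.mp ha)).2)]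
  have hfib : ∀ T ∈ Finset.powersetCard m (β.supportᶜ),
      ((Finset.univ.filter fun a : Equiv.Perm (Fin n) =>
          β.support.map a.toEmbedding ∈ Finset.powersetCard m (β.supportᶜ)).filter
        fun a => β.support.map a.toEmbedding = T).card
      = Nat.factorial m * Nat.factorial (n - m) := by
    intro T hT
    have : ((Finset.univ.filter fun a : Equiv.Perm (Fin n) =>
          β.support.map a.toEmbedding ∈ Finset.powersetCard m (β.supportᶜ)).filter
        fun a => β.support.map a.toEmbedding = T)
        = Finset.univ.filter fun a : Equiv.Perm (Fin n) =>
            β.support.map a.toEmbedding = T := by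
      ext a
      simp only [Finset.mem_filter, Finset.mem_univ, true_and]
      constructor
      · exact fun h => h.2
      · exact fun h => ⟨h ▸ hT, h⟩
    rw [this, card_perm_map_eq β.support T
      (by rw [hcard, (Finset.mem_powersetCard.mp hT).2]), hcard, Fintype.card_fin]
  rw [Finset.sum_congr rfl hfib, Finset.sum_const, Finset.card_powersetCard,
    Finset.card_compl, Fintype.card_fin, hcard, smul_eq_mul]
  ring
end

section
/- Let β₃ be a 3-cycle in S_n. Then: (1) c(0, β₃) = 3(n−3)! for n ≥ 3; (2) c(3, β₃) = (3(n−3)+1)·3(n−3)! for n ≥ 3; (3) c(4, β₃) = 3(n−3)·3(n−3)! for n ≥ 4; (4) c(5, β₃) = 6·C(n−3, 2)·3(n−3)! for n ≥ 5; (5) c(6, β₃) = 2·C(n−3, 3)·3(n−3)! for n ≥ 6; (6) c(k, β₃) = 0 for every k with 7 ≤ k ≤ n. Here C(a,b) denotes the binomial coefficient. -/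
namespace CK
open Finset Equiv
variable {n : ℕ}

def gfun (x y z a : Fin n) : Fin n :=
  if a = x then y else if a = y then z else if a = z then x else a

def pat (b1 b2 b3 a : Fin n) : Fin 4 :=
  if a = b1 then 0 else if a = b2 then 1 else if a = b3 then 2 else 3

def c3 (p : Fin 4 × Fin 4 × Fin 4) : ℕ :=
  (if p.1 = 3 then 1 else 0) + (if p.2.1 = 3 then 1 else 0) + (if p.2.2 = 3 then 1 else 0)

def epair (i j : Fin 4) : ℕ :=
  if (i = 0 ∧ j = 1) ∨ (i = 1 ∧ j = 2) ∨ (i = 2 ∧ j = 0) then 1 else 0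

def eval3 (p : Fin 4 × Fin 4 × Fin 4) : ℕ :=
  epair p.1 p.2.1 + epair p.2.1 p.2.2 + epair p.2.2 p.1

def hval (p : Fin 4 × Fin 4 × Fin 4) : ℕ := 3 + c3 p - eval3 p

def valid (p : Fin 4 × Fin 4 × Fin 4) : Prop :=
  (p.1 = p.2.1 → p.1 = 3) ∧ (p.1 = p.2.2 → p.1 = 3) ∧ (p.2.1 = p.2.2 → p.2.1 = 3)

instance : DecidablePred valid := fun p => by unfold valid; infer_instance

structure Ctx (n : ℕ) where
  β : Equiv.Perm (Fin n)
  b1 : Fin n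
  b2 : Fin n
  b3 : Fin n
  h12 : β b1 = b2
  h23 : β b2 = b3
  h31 : β b3 = b1
  d12 : b1 ≠ b2
  d13 : b1 ≠ b3
  d23 : b2 ≠ b3
  hfix : ∀ a, a ≠ b1 → a ≠ b2 → a ≠ b3 → β a = a

variable (Γ : Ctx n)

def patt (t : Fin n × Fin n × Fin n) : Fin 4 × Fin 4 × Fin 4 :=
  (pat Γ.b1 Γ.b2 Γ.b3 t.1, pat Γ.b1 Γ.b2 Γ.b3 t.2.1, pat Γ.b1 Γ.b2 Γ.b3 t.2.2)

def Inj (t : Fin n × Fin n × Fin n) : Prop :=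
  t.1 ≠ t.2.1 ∧ t.1 ≠ t.2.2 ∧ t.2.1 ≠ t.2.2

instance : DecidablePred (Inj (n := n)) := fun t => by unfold Inj; infer_instance


section
variable {a : Fin n}

lemma patlem (a : Fin n) :
    (pat Γ.b1 Γ.b2 Γ.b3 a = 0 ↔ a = Γ.b1) ∧ (pat Γ.b1 Γ.b2 Γ.b3 a = 1 ↔ a = Γ.b2) ∧
    (pat Γ.b1 Γ.b2 Γ.b3 a = 2 ↔ a = Γ.b3) ∧
    (pat Γ.b1 Γ.b2 Γ.b3 a = 3 ↔ (a ≠ Γ.b1 ∧ a ≠ Γ.b2 ∧ a ≠ Γ.b3)) := by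
  have d12 := Γ.d12; have d13 := Γ.d13; have d23 := Γ.d23
  rcases eq_or_ne a Γ.b1 with h1 | h1
  · subst h1; simp (config := { decide := true }) [pat, d12, d13]
  rcases eq_or_ne a Γ.b2 with h2 | h2
  · subst h2; simp (config := { decide := true }) [pat, Ne.symm d12, d23]
  rcases eq_or_ne a Γ.b3 with h3 | h3
  · subst h3; simp (config := { decide := true }) [pat, Ne.symm d13, Ne.symm d23]
  · simp (config := { decide := true }) [pat, h1, h2, h3]

lemma pat0 : pat Γ.b1 Γ.b2 Γ.b3 a = 0 ↔ a = Γ.b1 := (patlem Γ a).1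
lemma pat1 : pat Γ.b1 Γ.b2 Γ.b3 a = 1 ↔ a = Γ.b2 := (patlem Γ a).2.1
lemma pat2 : pat Γ.b1 Γ.b2 Γ.b3 a = 2 ↔ a = Γ.b3 := (patlem Γ a).2.2.1
lemma pat3 : pat Γ.b1 Γ.b2 Γ.b3 a = 3 ↔ (a ≠ Γ.b1 ∧ a ≠ Γ.b2 ∧ a ≠ Γ.b3) :=
  (patlem Γ a).2.2.2

end

def SS (Γ : Ctx n) : Finset (Fin n) := {Γ.b1, Γ.b2, Γ.b3}

lemma card_SS : (SS Γ).card = 3 :=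
  Finset.card_eq_three.mpr ⟨Γ.b1, Γ.b2, Γ.b3, Γ.d12, Γ.d13, Γ.d23, rfl⟩

lemma beta_ne {a : Fin n} (ha : a ∈ SS Γ) : Γ.β a ≠ a := by
  rcases Finset.mem_insert.1 ha with h | h
  · subst h; rw [Γ.h12]; exact Ne.symm Γ.d12
  rcases Finset.mem_insert.1 h with h | h
  · subst h; rw [Γ.h23]; exact Ne.symm Γ.d23
  · rw [Finset.mem_singleton] at h; subst h; rw [Γ.h31]; exact Γ.d13

lemma notmem_SS {a : Fin n} : a ∉ SS Γ ↔ (a ≠ Γ.b1 ∧ a ≠ Γ.b2 ∧ a ≠ Γ.b3) := by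
  simp [SS]

lemma card_D (x y z : Fin n) (hxy : x ≠ y) (hxz : x ≠ z) (hyz : y ≠ z) :
    (univ.filter fun a => gfun x y z a ≠ Γ.β a).card = hval (patt Γ (x, y, z)) := by
  set p := patt Γ (x, y, z) with hp
  set T : Finset (Fin n) := {x, y, z} with hT
  set ST : Finset (Fin n) := SS Γ ∪ T with hST
  have gx : gfun x y z x = y := by simp [gfun]
  have gy : gfun x y z y = z := by simp [gfun, Ne.symm hxy]
  have gz : gfun x y z z = x := by simp [gfun, Ne.symm hxz, Ne.symm hyz]
  have gother : ∀ a, a ∉ T → gfun x y z a = a := by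
    intro a ha
    simp only [hT, Finset.mem_insert, Finset.mem_singleton, not_or] at ha
    simp [gfun, ha.1, ha.2.1, ha.2.2]
  -- step 1 : restrict to ST
  have step1 : (univ.filter fun a => gfun x y z a ≠ Γ.β a)
      = ST.filter fun a => gfun x y z a ≠ Γ.β a := by
    ext a
    simp only [Finset.mem_filter, Finset.mem_univ, true_and, iff_def]
    constructor
    · intro hD
      refine ⟨?_, hD⟩
      by_contra hmem
      simp only [hST, Finset.mem_union, not_or] at hmem
      exact hD ((gother a hmem.2).trans
        (Γ.hfix a ((notmem_SS Γ).1 hmem.1).1 ((notmem_SS Γ).1 hmem.1).2.1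
          ((notmem_SS Γ).1 hmem.1).2.2).symm)
    · exact fun h => h.2
  -- step 2 : split into agreements and disagreements
  have step2 := Finset.card_filter_add_card_filter_not
    (s := ST) (p := fun a => gfun x y z a ≠ Γ.β a)
  -- card of ST
  have cardT_sub : (T \ SS Γ).card = c3 p := by
    rw [show T \ SS Γ = T.filter (fun a => a ∉ SS Γ) from Finset.sdiff_eq_filter ..]
    rw [Finset.card_filter]
    rw [hT, Finset.sum_insert (by simp [hxy, hxz]),
      Finset.sum_insert (by simp [hyz]), Finset.sum_singleton]
    have e : ∀ a : Fin n, (if a ∉ SS Γ then 1 else 0)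
        = (if pat Γ.b1 Γ.b2 Γ.b3 a = 3 then (1:ℕ) else 0) := by
      intro a
      congr 1
      simp only [eq_iff_iff, notmem_SS Γ, pat3 Γ]
    rw [e, e, e]
    simp only [hp, patt, c3]
    ring
  have cardST : ST.card = 3 + c3 p := by
    rw [hST, Finset.union_comm, ← Finset.card_sdiff_add_card, cardT_sub, card_SS]
    omega
  -- agreements
  have step4 : ST.filter (fun a => ¬ gfun x y z a ≠ Γ.β a)
      = T.filter (fun a => gfun x y z a = Γ.β a) := by
    ext a
    simp only [Finset.mem_filter, not_not, hST, Finset.mem_union]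
    constructor
    · rintro ⟨hm, he⟩
      refine ⟨?_, he⟩
      rcases hm with hm | hm
      · by_contra hnT
        exact beta_ne Γ hm (he.symm.trans (gother a hnT))
      · exact hm
    · rintro ⟨hm, he⟩
      exact ⟨Or.inr hm, he⟩
  have step5 : (T.filter (fun a => gfun x y z a = Γ.β a)).card = eval3 p := by
    rw [Finset.card_filter, hT, Finset.sum_insert (by simp [hxy, hxz]),
      Finset.sum_insert (by simp [hyz]), Finset.sum_singleton, gx, gy, gz]
    have key : ∀ u v : Fin n, u ≠ v → ((if v = Γ.β u then (1:ℕ) else 0)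
        = epair (pat Γ.b1 Γ.b2 Γ.b3 u) (pat Γ.b1 Γ.b2 Γ.b3 v)) := by
      intro u v huv
      unfold epair
      rcases eq_or_ne u Γ.b1 with rfl | h1
      · rw [Γ.h12]
        rw [(pat0 Γ (a := Γ.b1)).mpr rfl]
        simp (config := { decide := true }) [pat1 Γ, eq_comm]
      rcases eq_or_ne u Γ.b2 with rfl | h2
      · rw [Γ.h23]
        rw [(pat1 Γ (a := Γ.b2)).mpr rfl]
        simp (config := { decide := true }) [pat2 Γ, eq_comm]
      rcases eq_or_ne u Γ.b3 with rfl | h3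
      · rw [Γ.h31]
        rw [(pat2 Γ (a := Γ.b3)).mpr rfl]
        simp (config := { decide := true }) [pat0 Γ, eq_comm]
      · rw [Γ.hfix u h1 h2 h3]
        rw [(pat3 Γ (a := u)).mpr ⟨h1, h2, h3⟩]
        simp (config := { decide := true }) [Ne.symm huv]
    rw [key x y hxy, key y z hyz, key z x (Ne.symm hxz)]
    simp only [hp, patt, eval3]
    ring
  rw [step1]
  rw [step4, step5, cardST] at step2
  have heval : eval3 p ≤ 3 + c3 p := by
    have : ∀ q : Fin 4 × Fin 4 × Fin 4, eval3 q ≤ 3 + c3 q := by decide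
    exact this p
  unfold hval
  omega

lemma hamming_eq (α : Equiv.Perm (Fin n)) :
    hamming (α * Γ.β) (Γ.β * α) =
    (univ.filter fun a => gfun (α Γ.b1) (α Γ.b2) (α Γ.b3) a ≠ Γ.β a).card := by
  unfold hamming
  have hg : ∀ c, gfun (α Γ.b1) (α Γ.b2) (α Γ.b3) (α c) = α (Γ.β c) := by
    intro c
    rcases eq_or_ne c Γ.b1 with rfl | h1
    · simp [gfun, Γ.h12]
    rcases eq_or_ne c Γ.b2 with rfl | h2
    · simp [gfun, Γ.h23, α.injective.ne (Ne.symm Γ.d12)]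
    rcases eq_or_ne c Γ.b3 with rfl | h3
    · simp [gfun, Γ.h31, α.injective.ne (Ne.symm Γ.d13), α.injective.ne (Ne.symm Γ.d23)]
    · rw [Γ.hfix c h1 h2 h3]
      simp [gfun, α.injective.ne h1, α.injective.ne h2, α.injective.ne h3]
  apply Finset.card_bij (fun c _ => α c)
  · intro c hc
    simp only [Finset.mem_filter, Finset.mem_univ, true_and] at hc ⊢
    rw [hg c]
    simpa [Equiv.Perm.mul_apply] using hc
  · intro c1 _ c2 _ h
    exact α.injective h
  · intro a ha
    refine ⟨α.symm a, ?_, by simp⟩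
    simp only [Finset.mem_filter, Finset.mem_univ, true_and] at ha ⊢
    have h2 := hg (α.symm a)
    rw [Equiv.apply_symm_apply] at h2
    simp only [Equiv.Perm.mul_apply, Equiv.apply_symm_apply]
    rw [← h2]
    exact ha

lemma card_stab :
    (univ.filter fun σ : Equiv.Perm (Fin n) =>
      σ Γ.b1 = Γ.b1 ∧ σ Γ.b2 = Γ.b2 ∧ σ Γ.b3 = Γ.b3).card = (n - 3).factorial := by
  classical
  rw [← Fintype.card_subtype]
  set Q : Fin n → Prop := fun a => a ≠ Γ.b1 ∧ a ≠ Γ.b2 ∧ a ≠ Γ.b3 with hQ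
  have e1 : {σ : Equiv.Perm (Fin n) // σ Γ.b1 = Γ.b1 ∧ σ Γ.b2 = Γ.b2 ∧ σ Γ.b3 = Γ.b3}
      ≃ {f : Equiv.Perm (Fin n) // ∀ a, ¬ Q a → f a = a} := by
    apply Equiv.subtypeEquivRight
    intro f
    constructor
    · rintro ⟨hf1, hf2, hf3⟩ a ha
      simp only [hQ, not_and_or, not_not, not_ne_iff] at ha
      rcases ha with rfl | rfl | rfl <;> assumption
    · intro h
      exact ⟨h Γ.b1 (by simp [hQ]), h Γ.b2 (by simp [hQ]), h Γ.b3 (by simp [hQ])⟩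
  rw [Fintype.card_congr (e1.trans (Equiv.Perm.subtypeEquivSubtypePerm Q).symm)]
  rw [Fintype.card_perm]
  congr 1
  rw [Fintype.card_subtype]
  have : (univ.filter Q) = univ \ SS Γ := by
    ext a
    simp [hQ, Finset.mem_sdiff, notmem_SS Γ]
  rw [this, Finset.card_sdiff_of_subset (Finset.subset_univ _), card_SS, Finset.card_univ,
    Fintype.card_fin]

lemma exists_perm (x y z : Fin n) (hxy : x ≠ y) (hxz : x ≠ z) (hyz : y ≠ z) :
    ∃ α0 : Equiv.Perm (Fin n), α0 Γ.b1 = x ∧ α0 Γ.b2 = y ∧ α0 Γ.b3 = z := by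
  classical
  set s1 : Equiv.Perm (Fin n) := Equiv.swap Γ.b1 x with hs1
  set s2 : Equiv.Perm (Fin n) := Equiv.swap (s1 Γ.b2) y with hs2
  set s3 : Equiv.Perm (Fin n) := Equiv.swap (s2 (s1 Γ.b3)) z with hs3
  have f1 : s1 Γ.b1 = x := Equiv.swap_apply_left _ _
  have hA : s1 Γ.b2 ≠ x := by
    rw [← f1]; exact s1.injective.ne (Ne.symm Γ.d12)
  have hB : s2 x = x := Equiv.swap_apply_of_ne_of_ne (Ne.symm hA) hxy
  have hC : s1 Γ.b3 ≠ x := by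
    rw [← f1]; exact s1.injective.ne (Ne.symm Γ.d13)
  have hC' : s2 (s1 Γ.b3) ≠ x := by
    rw [← hB]; exact s2.injective.ne hC
  have hD : s3 x = x := Equiv.swap_apply_of_ne_of_ne (Ne.symm hC') hxz
  have hE : s2 (s1 Γ.b2) = y := Equiv.swap_apply_left _ _
  have hF : s2 (s1 Γ.b3) ≠ y := by
    rw [← hE]; exact s2.injective.ne (s1.injective.ne (Ne.symm Γ.d23))
  have hG : s3 y = y := Equiv.swap_apply_of_ne_of_ne (Ne.symm hF) hyz
  refine ⟨s3 * s2 * s1, ?_, ?_, ?_⟩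
  · simp only [Equiv.Perm.mul_apply, f1, hB, hD]
  · simp only [Equiv.Perm.mul_apply, hE, hG]
  · simp only [Equiv.Perm.mul_apply]
    exact Equiv.swap_apply_left _ _

lemma card_fiber (x y z : Fin n) (hxy : x ≠ y) (hxz : x ≠ z) (hyz : y ≠ z) :
    (univ.filter fun α : Equiv.Perm (Fin n) =>
      α Γ.b1 = x ∧ α Γ.b2 = y ∧ α Γ.b3 = z).card = (n - 3).factorial := by
  classical
  obtain ⟨α0, h1, h2, h3⟩ := exists_perm Γ x y z hxy hxz hyz
  rw [← card_stab Γ]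
  apply Finset.card_bij' (fun α _ => α0⁻¹ * α) (fun σ _ => α0 * σ)
  · intro α hα
    simp only [Finset.mem_filter, Finset.mem_univ, true_and] at hα ⊢
    simp only [Equiv.Perm.mul_apply, hα.1, hα.2.1, hα.2.2]
    refine ⟨?_, ?_, ?_⟩ <;>
      [rw [← h1]; rw [← h2]; rw [← h3]] <;> simp
  · intro σ hσ
    simp only [Finset.mem_filter, Finset.mem_univ, true_and] at hσ ⊢
    simp only [Equiv.Perm.mul_apply, hσ.1, hσ.2.1, hσ.2.2, h1, h2, h3]
    exact ⟨trivial, trivial, trivial⟩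
  · intro α _; simp [mul_assoc]
  · intro σ _; simp [← mul_assoc]

def Tk (Γ : Ctx n) (k : ℕ) : Finset (Fin n × Fin n × Fin n) :=
  univ.filter fun t => Inj t ∧ hval (patt Γ t) = k

lemma kcomm_eq (k : ℕ) : kcomm k Γ.β = (Tk Γ k).card * (n - 3).factorial := by
  classical
  unfold kcomm
  have hmap : ∀ α ∈ (univ.filter fun α : Equiv.Perm (Fin n) =>
      hamming (α * Γ.β) (Γ.β * α) = k), (α Γ.b1, α Γ.b2, α Γ.b3) ∈ Tk Γ k := by
    intro α hα
    simp only [Finset.mem_filter, Finset.mem_univ, true_and] at hα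
    refine Finset.mem_filter.2 ⟨Finset.mem_univ _,
      ⟨⟨α.injective.ne Γ.d12, α.injective.ne Γ.d13, α.injective.ne Γ.d23⟩, ?_⟩⟩
    rw [show patt Γ (α Γ.b1, α Γ.b2, α Γ.b3) = patt Γ (α Γ.b1, α Γ.b2, α Γ.b3) from rfl,
      ← card_D Γ _ _ _ (α.injective.ne Γ.d12) (α.injective.ne Γ.d13) (α.injective.ne Γ.d23),
      ← hamming_eq Γ α]
    exact hα
  rw [Finset.card_eq_sum_card_fiberwise hmap]
  have hfib : ∀ t ∈ Tk Γ k,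
      ((univ.filter fun α : Equiv.Perm (Fin n) => hamming (α * Γ.β) (Γ.β * α) = k).filter
        fun α => (α Γ.b1, α Γ.b2, α Γ.b3) = t).card = (n - 3).factorial := by
    intro t ht
    simp only [Tk, Finset.mem_filter, Finset.mem_univ, true_and] at ht
    obtain ⟨⟨i12, i13, i23⟩, hv⟩ := ht
    have hset : ((univ.filter fun α : Equiv.Perm (Fin n) =>
          hamming (α * Γ.β) (Γ.β * α) = k).filter fun α => (α Γ.b1, α Γ.b2, α Γ.b3) = t)
        = univ.filter fun α : Equiv.Perm (Fin n) =>
            α Γ.b1 = t.1 ∧ α Γ.b2 = t.2.1 ∧ α Γ.b3 = t.2.2 := by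
      ext α
      simp only [Finset.mem_filter, Finset.mem_univ, true_and, Prod.ext_iff]
      constructor
      · rintro ⟨_, h⟩
        exact ⟨h.1, h.2.1, h.2.2⟩
      · rintro ⟨e1, e2, e3⟩
        refine ⟨?_, e1, e2, e3⟩
        rw [hamming_eq Γ α, e1, e2, e3, card_D Γ t.1 t.2.1 t.2.2 i12 i13 i23]
        exact hv
    rw [hset]
    exact card_fiber Γ t.1 t.2.1 t.2.2 i12 i13 i23
  rw [Finset.sum_congr rfl hfib, Finset.sum_const, smul_eq_mul]

lemma card_inj3 (C : Finset (Fin n)) :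
    (univ.filter fun t : Fin n × Fin n × Fin n =>
      Inj t ∧ t.1 ∈ C ∧ t.2.1 ∈ C ∧ t.2.2 ∈ C).card
      = C.card * ((C.card - 1) * (C.card - 2)) := by
  classical
  rw [Finset.card_eq_sum_card_fiberwise (f := fun t => t.1) (t := C)
    (fun t ht => (Finset.mem_filter.1 ht).2.2.1)]
  have hfib : ∀ x ∈ C,
      ((univ.filter fun t : Fin n × Fin n × Fin n =>
        Inj t ∧ t.1 ∈ C ∧ t.2.1 ∈ C ∧ t.2.2 ∈ C).filter fun t => t.1 = x).card
      = (C.card - 1) * (C.card - 2) := by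
    intro x hx
    have : (((univ.filter fun t : Fin n × Fin n × Fin n =>
        Inj t ∧ t.1 ∈ C ∧ t.2.1 ∈ C ∧ t.2.2 ∈ C).filter fun t => t.1 = x)).card
        = ((C.erase x).offDiag).card := by
      apply Finset.card_nbij' (fun t => (t.2.1, t.2.2)) (fun q => (x, q.1, q.2))
      · intro t ht
        simp only [Finset.mem_coe, Finset.mem_filter, Finset.mem_univ, true_and, Finset.mem_offDiag,
          Finset.mem_erase] at ht ⊢
        obtain ⟨⟨⟨hi1, hi2, hi3⟩, _, hc2, hc3⟩, hx1⟩ := ht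
        exact ⟨⟨by rw [← hx1]; exact (Ne.symm hi1), hc2⟩,
          ⟨by rw [← hx1]; exact (Ne.symm hi2), hc3⟩, hi3⟩
      · intro q hq
        simp only [Finset.mem_coe, Finset.mem_offDiag, Finset.mem_erase] at hq
        simp only [Finset.mem_coe, Finset.mem_filter, Finset.mem_univ, true_and, Inj]
        exact ⟨Finset.mem_filter.2 ⟨Finset.mem_univ _,
          ⟨Ne.symm hq.1.1, Ne.symm hq.2.1.1, hq.2.2⟩, hx, hq.1.2, hq.2.1.2⟩, trivial⟩
      · intro t ht
        simp only [Finset.mem_coe, Finset.mem_filter] at ht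
        rw [← ht.2]
      · intro q _
        rfl
    have aux : ∀ a : ℕ, a * a - a = a * (a - 1) := by
      intro a
      cases a with
      | zero => simp
      | succ j => rw [Nat.succ_sub_one, Nat.mul_succ, Nat.add_sub_cancel]
    rw [this, Finset.offDiag_card, Finset.card_erase_of_mem hx, aux,
      show C.card - 1 - 1 = C.card - 2 from by omega]
  rw [Finset.sum_congr rfl hfib, Finset.sum_const, smul_eq_mul]

lemma nat_aux (a : ℕ) : a * a - a = a * (a - 1) := by
  cases a with
  | zero => simp
  | succ j => rw [Nat.succ_sub_one, Nat.mul_succ, Nat.add_sub_cancel]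

def CC (Γ : Ctx n) : Finset (Fin n) := univ \ SS Γ

lemma card_CC : (CC Γ).card = n - 3 := by
  rw [CC, Finset.card_sdiff_of_subset (Finset.subset_univ _), card_SS, Finset.card_univ,
    Fintype.card_fin]

def vv (Γ : Ctx n) : Fin 4 → Fin n := ![Γ.b1, Γ.b2, Γ.b3, Γ.b1]

lemma pat_eq_iff {j : Fin 4} (hj : j ≠ 3) {a : Fin n} :
    pat Γ.b1 Γ.b2 Γ.b3 a = j ↔ a = vv Γ j := by
  fin_cases j
  · simpa [vv] using pat0 Γ (a := a)
  · simpa [vv] using pat1 Γ (a := a)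
  · simpa [vv] using pat2 Γ (a := a)
  · exact absurd rfl hj

lemma mem_CC {a : Fin n} : a ∈ CC Γ ↔ pat Γ.b1 Γ.b2 Γ.b3 a = 3 := by
  simp [CC, Finset.mem_sdiff, notmem_SS Γ, pat3 Γ]

lemma vv_mem_SS {j : Fin 4} (hj : j ≠ 3) : vv Γ j ∈ SS Γ := by
  fin_cases j
  · simp [vv, SS]
  · simp [vv, SS]
  · simp [vv, SS]
  · exact absurd rfl hj

lemma vv_ne {i j : Fin 4} (hi : i ≠ 3) (hj : j ≠ 3) (hij : i ≠ j) : vv Γ i ≠ vv Γ j := by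
  intro h
  apply hij
  have h1 := (pat_eq_iff Γ hi (a := vv Γ i)).mpr rfl
  rw [h] at h1
  have h2 := (pat_eq_iff Γ hj (a := vv Γ j)).mpr rfl
  rw [h1] at h2
  exact h2.symm ▸ rfl

lemma CC_ne_vv {a : Fin n} (ha : a ∈ CC Γ) {j : Fin 4} (hj : j ≠ 3) : a ≠ vv Γ j := by
  intro h
  have := (mem_CC Γ).1 ha
  rw [h, (pat_eq_iff Γ hj (a := vv Γ j)).mpr rfl] at this
  exact hj this

lemma card_patfiber (p : Fin 4 × Fin 4 × Fin 4) (hv : valid p) :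
    (univ.filter fun t : Fin n × Fin n × Fin n => Inj t ∧ patt Γ t = p).card
      = (n - 3).descFactorial (c3 p) := by
  classical
  obtain ⟨p1, p2, p3⟩ := p
  obtain ⟨hv1, hv2, hv3⟩ := hv
  by_cases h1 : p1 = 3 <;> by_cases h2 : p2 = 3 <;> by_cases h3 : p3 = 3
  -- case: all free
  · subst h1; subst h2; subst h3
    have hset : (univ.filter fun t : Fin n × Fin n × Fin n =>
        Inj t ∧ patt Γ t = ((3 : Fin 4), (3 : Fin 4), (3 : Fin 4)))
        = univ.filter fun t : Fin n × Fin n × Fin n =>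
          Inj t ∧ t.1 ∈ CC Γ ∧ t.2.1 ∈ CC Γ ∧ t.2.2 ∈ CC Γ := by
      ext t
      simp only [Finset.mem_filter, Finset.mem_univ, true_and, patt, Prod.ext_iff,
        mem_CC Γ]
    rw [hset, card_inj3, card_CC]
    simp [c3, Nat.descFactorial]
    ring
  -- case: p1 p2 free, p3 fixed
  · have hne : vv Γ p3 ∉ CC Γ := by
      simp only [CC, Finset.mem_sdiff, Finset.mem_univ, true_and, not_not]
      exact vv_mem_SS Γ h3
    have hcard : (univ.filter fun t : Fin n × Fin n × Fin n =>
        Inj t ∧ patt Γ t = (p1, p2, p3)).card = ((CC Γ).offDiag).card := by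
      apply Finset.card_nbij' (fun t => (t.1, t.2.1)) (fun q => (q.1, q.2, vv Γ p3))
      · intro t ht
        simp only [Finset.mem_coe, Finset.mem_filter, Finset.mem_univ, true_and, patt, Prod.ext_iff,
          Inj] at ht
        obtain ⟨⟨i12, i13, i23⟩, q1, q2, q3⟩ := ht
        subst h1; subst h2
        simp only [Finset.mem_coe, Finset.mem_offDiag]
        exact ⟨(mem_CC Γ).2 q1, (mem_CC Γ).2 q2, i12⟩
      · intro q hq
        simp only [Finset.mem_coe, Finset.mem_offDiag] at hq
        simp only [Finset.mem_coe, Finset.mem_filter, Finset.mem_univ, true_and, patt, Prod.ext_iff, Inj]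
        subst h1; subst h2
        exact ⟨⟨hq.2.2, CC_ne_vv Γ hq.1 h3, CC_ne_vv Γ hq.2.1 h3⟩,
          (mem_CC Γ).1 hq.1, (mem_CC Γ).1 hq.2.1, (pat_eq_iff Γ h3).mpr rfl⟩
      · intro t ht
        simp only [Finset.mem_coe, Finset.mem_filter, Finset.mem_univ, true_and, patt, Prod.ext_iff,
          Inj] at ht
        have : t.2.2 = vv Γ p3 := (pat_eq_iff Γ h3).mp ht.2.2.2
        rw [← this]
      · intro q _
        rfl
    rw [hcard, Finset.offDiag_card, nat_aux, card_CC]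
    subst h1; subst h2
    simp [c3, h3, Nat.descFactorial]
    ring
  -- case: p1 p3 free, p2 fixed
  · have hcard : (univ.filter fun t : Fin n × Fin n × Fin n =>
        Inj t ∧ patt Γ t = (p1, p2, p3)).card = ((CC Γ).offDiag).card := by
      apply Finset.card_nbij' (fun t => (t.1, t.2.2)) (fun q => (q.1, vv Γ p2, q.2))
      · intro t ht
        simp only [Finset.mem_coe, Finset.mem_filter, Finset.mem_univ, true_and, patt, Prod.ext_iff,
          Inj] at ht
        obtain ⟨⟨i12, i13, i23⟩, q1, q2, q3⟩ := ht
        subst h1; subst h3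
        simp only [Finset.mem_coe, Finset.mem_offDiag]
        exact ⟨(mem_CC Γ).2 q1, (mem_CC Γ).2 q3, i13⟩
      · intro q hq
        simp only [Finset.mem_coe, Finset.mem_offDiag] at hq
        simp only [Finset.mem_coe, Finset.mem_filter, Finset.mem_univ, true_and, patt, Prod.ext_iff, Inj]
        subst h1; subst h3
        exact ⟨⟨CC_ne_vv Γ hq.1 h2, hq.2.2, Ne.symm (CC_ne_vv Γ hq.2.1 h2)⟩,
          (mem_CC Γ).1 hq.1, (pat_eq_iff Γ h2).mpr rfl, (mem_CC Γ).1 hq.2.1⟩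
      · intro t ht
        simp only [Finset.mem_coe, Finset.mem_filter, Finset.mem_univ, true_and, patt, Prod.ext_iff,
          Inj] at ht
        have : t.2.1 = vv Γ p2 := (pat_eq_iff Γ h2).mp ht.2.2.1
        rw [← this]
      · intro q _
        rfl
    rw [hcard, Finset.offDiag_card, nat_aux, card_CC]
    subst h1; subst h3
    simp [c3, h2, Nat.descFactorial]
    ring
  -- case: p1 free, p2 p3 fixed
  · have hp23 : p2 ≠ p3 := fun e => h2 (hv3 e)
    have hcard : (univ.filter fun t : Fin n × Fin n × Fin n =>
        Inj t ∧ patt Γ t = (p1, p2, p3)).card = (CC Γ).card := by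
      apply Finset.card_nbij' (fun t => t.1) (fun z => (z, vv Γ p2, vv Γ p3))
      · intro t ht
        simp only [Finset.mem_coe, Finset.mem_filter, Finset.mem_univ, true_and, patt, Prod.ext_iff,
          Inj] at ht
        subst h1
        exact (mem_CC Γ).2 ht.2.1
      · intro z hz
        simp only [Finset.mem_coe, Finset.mem_filter, Finset.mem_univ, true_and, patt, Prod.ext_iff, Inj]
        subst h1
        exact ⟨⟨CC_ne_vv Γ hz h2, CC_ne_vv Γ hz h3, vv_ne Γ h2 h3 hp23⟩,
          (mem_CC Γ).1 hz, (pat_eq_iff Γ h2).mpr rfl, (pat_eq_iff Γ h3).mpr rfl⟩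
      · intro t ht
        simp only [Finset.mem_coe, Finset.mem_filter, Finset.mem_univ, true_and, patt, Prod.ext_iff,
          Inj] at ht
        have e2 : t.2.1 = vv Γ p2 := (pat_eq_iff Γ h2).mp ht.2.2.1
        have e3 : t.2.2 = vv Γ p3 := (pat_eq_iff Γ h3).mp ht.2.2.2
        rw [← e2, ← e3]
      · intro z _
        rfl
    rw [hcard, card_CC]
    subst h1
    simp [c3, h2, h3, Nat.descFactorial]
  -- case: p2 p3 free, p1 fixed
  · have hcard : (univ.filter fun t : Fin n × Fin n × Fin n =>
        Inj t ∧ patt Γ t = (p1, p2, p3)).card = ((CC Γ).offDiag).card := by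
      apply Finset.card_nbij' (fun t => (t.2.1, t.2.2)) (fun q => (vv Γ p1, q.1, q.2))
      · intro t ht
        simp only [Finset.mem_coe, Finset.mem_filter, Finset.mem_univ, true_and, patt, Prod.ext_iff,
          Inj] at ht
        obtain ⟨⟨i12, i13, i23⟩, q1, q2, q3⟩ := ht
        subst h2; subst h3
        simp only [Finset.mem_coe, Finset.mem_offDiag]
        exact ⟨(mem_CC Γ).2 q2, (mem_CC Γ).2 q3, i23⟩
      · intro q hq
        simp only [Finset.mem_coe, Finset.mem_offDiag] at hq
        simp only [Finset.mem_coe, Finset.mem_filter, Finset.mem_univ, true_and, patt, Prod.ext_iff, Inj]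
        subst h2; subst h3
        exact ⟨⟨Ne.symm (CC_ne_vv Γ hq.1 h1), Ne.symm (CC_ne_vv Γ hq.2.1 h1), hq.2.2⟩,
          (pat_eq_iff Γ h1).mpr rfl, (mem_CC Γ).1 hq.1, (mem_CC Γ).1 hq.2.1⟩
      · intro t ht
        simp only [Finset.mem_coe, Finset.mem_filter, Finset.mem_univ, true_and, patt, Prod.ext_iff,
          Inj] at ht
        have : t.1 = vv Γ p1 := (pat_eq_iff Γ h1).mp ht.2.1
        rw [← this]
      · intro q _
        rfl
    rw [hcard, Finset.offDiag_card, nat_aux, card_CC]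
    subst h2; subst h3
    simp [c3, h1, Nat.descFactorial]
    ring
  -- case: p2 free, p1 p3 fixed
  · have hp13 : p1 ≠ p3 := fun e => h1 (hv2 e)
    have hcard : (univ.filter fun t : Fin n × Fin n × Fin n =>
        Inj t ∧ patt Γ t = (p1, p2, p3)).card = (CC Γ).card := by
      apply Finset.card_nbij' (fun t => t.2.1) (fun z => (vv Γ p1, z, vv Γ p3))
      · intro t ht
        simp only [Finset.mem_coe, Finset.mem_filter, Finset.mem_univ, true_and, patt, Prod.ext_iff,
          Inj] at ht
        subst h2
        exact (mem_CC Γ).2 ht.2.2.1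
      · intro z hz
        simp only [Finset.mem_coe, Finset.mem_filter, Finset.mem_univ, true_and, patt, Prod.ext_iff, Inj]
        subst h2
        exact ⟨⟨Ne.symm (CC_ne_vv Γ hz h1), vv_ne Γ h1 h3 hp13, CC_ne_vv Γ hz h3⟩,
          (pat_eq_iff Γ h1).mpr rfl, (mem_CC Γ).1 hz, (pat_eq_iff Γ h3).mpr rfl⟩
      · intro t ht
        simp only [Finset.mem_coe, Finset.mem_filter, Finset.mem_univ, true_and, patt, Prod.ext_iff,
          Inj] at ht
        have e1 : t.1 = vv Γ p1 := (pat_eq_iff Γ h1).mp ht.2.1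
        have e3 : t.2.2 = vv Γ p3 := (pat_eq_iff Γ h3).mp ht.2.2.2
        rw [← e1, ← e3]
      · intro z _
        rfl
    rw [hcard, card_CC]
    subst h2
    simp [c3, h1, h3, Nat.descFactorial]
  -- case: p3 free, p1 p2 fixed
  · have hp12 : p1 ≠ p2 := fun e => h1 (hv1 e)
    have hcard : (univ.filter fun t : Fin n × Fin n × Fin n =>
        Inj t ∧ patt Γ t = (p1, p2, p3)).card = (CC Γ).card := by
      apply Finset.card_nbij' (fun t => t.2.2) (fun z => (vv Γ p1, vv Γ p2, z))
      · intro t ht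
        simp only [Finset.mem_coe, Finset.mem_filter, Finset.mem_univ, true_and, patt, Prod.ext_iff,
          Inj] at ht
        subst h3
        exact (mem_CC Γ).2 ht.2.2.2
      · intro z hz
        simp only [Finset.mem_coe, Finset.mem_filter, Finset.mem_univ, true_and, patt, Prod.ext_iff, Inj]
        subst h3
        exact ⟨⟨vv_ne Γ h1 h2 hp12, Ne.symm (CC_ne_vv Γ hz h1), Ne.symm (CC_ne_vv Γ hz h2)⟩,
          (pat_eq_iff Γ h1).mpr rfl, (pat_eq_iff Γ h2).mpr rfl, (mem_CC Γ).1 hz⟩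
      · intro t ht
        simp only [Finset.mem_coe, Finset.mem_filter, Finset.mem_univ, true_and, patt, Prod.ext_iff,
          Inj] at ht
        have e1 : t.1 = vv Γ p1 := (pat_eq_iff Γ h1).mp ht.2.1
        have e2 : t.2.1 = vv Γ p2 := (pat_eq_iff Γ h2).mp ht.2.2.1
        rw [← e1, ← e2]
      · intro z _
        rfl
    rw [hcard, card_CC]
    subst h3
    simp [c3, h1, h2, Nat.descFactorial]
  -- case: none free (singleton)
  · have hp12 : p1 ≠ p2 := fun e => h1 (hv1 e)
    have hp13 : p1 ≠ p3 := fun e => h1 (hv2 e)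
    have hp23 : p2 ≠ p3 := fun e => h2 (hv3 e)
    have hset : (univ.filter fun t : Fin n × Fin n × Fin n =>
        Inj t ∧ patt Γ t = (p1, p2, p3)) = {(vv Γ p1, vv Γ p2, vv Γ p3)} := by
      ext t
      simp only [Finset.mem_filter, Finset.mem_univ, true_and, patt, Prod.ext_iff,
        Inj, Finset.mem_singleton]
      constructor
      · rintro ⟨_, q1, q2, q3⟩
        exact ⟨(pat_eq_iff Γ h1).mp q1, (pat_eq_iff Γ h2).mp q2, (pat_eq_iff Γ h3).mp q3⟩
      · rintro ⟨e1, e2, e3⟩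
        rw [e1, e2, e3]
        exact ⟨⟨vv_ne Γ h1 h2 hp12, vv_ne Γ h1 h3 hp13, vv_ne Γ h2 h3 hp23⟩,
          (pat_eq_iff Γ h1).mpr rfl, (pat_eq_iff Γ h2).mpr rfl, (pat_eq_iff Γ h3).mpr rfl⟩
    rw [hset, Finset.card_singleton]
    simp [c3, h1, h2, h3, Nat.descFactorial]

lemma Tk_card (k : ℕ) : (Tk Γ k).card =
    ∑ p ∈ (univ.filter fun p : Fin 4 × Fin 4 × Fin 4 => valid p ∧ hval p = k),
      (n - 3).descFactorial (c3 p) := by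
  classical
  have hmap : ∀ t ∈ Tk Γ k, patt Γ t ∈
      (univ.filter fun p : Fin 4 × Fin 4 × Fin 4 => valid p ∧ hval p = k) := by
    intro t ht
    simp only [Tk, Finset.mem_filter, Finset.mem_univ, true_and] at ht ⊢
    obtain ⟨⟨i12, i13, i23⟩, hvk⟩ := ht
    refine ⟨⟨?_, ?_, ?_⟩, hvk⟩
    · intro e
      by_contra hne
      exact i12 (((pat_eq_iff Γ hne).mp rfl).trans ((pat_eq_iff Γ hne).mp e.symm).symm)
    · intro e
      by_contra hne
      exact i13 (((pat_eq_iff Γ hne).mp rfl).trans ((pat_eq_iff Γ hne).mp e.symm).symm)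
    · intro e
      by_contra hne
      exact i23 (((pat_eq_iff Γ hne).mp rfl).trans ((pat_eq_iff Γ hne).mp e.symm).symm)
  rw [Finset.card_eq_sum_card_fiberwise hmap]
  apply Finset.sum_congr rfl
  intro p hp
  simp only [Finset.mem_filter, Finset.mem_univ, true_and] at hp
  have hset : ((Tk Γ k).filter fun t => patt Γ t = p)
      = univ.filter fun t : Fin n × Fin n × Fin n => Inj t ∧ patt Γ t = p := by
    ext t
    simp only [Tk, Finset.mem_filter, Finset.mem_univ, true_and]
    constructor
    · rintro ⟨⟨hi, _⟩, he⟩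
      exact ⟨hi, he⟩
    · rintro ⟨hi, he⟩
      exact ⟨⟨hi, by rw [he]; exact hp.2⟩, he⟩
  rw [hset, card_patfiber Γ p hp.1]

lemma sum_desc (Q : Finset (Fin 4 × Fin 4 × Fin 4)) (m : ℕ) :
    ∑ p ∈ Q, m.descFactorial (c3 p)
      = (Q.filter fun p => c3 p = 0).card * m.descFactorial 0
      + (Q.filter fun p => c3 p = 1).card * m.descFactorial 1
      + (Q.filter fun p => c3 p = 2).card * m.descFactorial 2
      + (Q.filter fun p => c3 p = 3).card * m.descFactorial 3 := by
  have hle : ∀ p : Fin 4 × Fin 4 × Fin 4, c3 p < 4 := by decide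
  rw [← Finset.sum_fiberwise_of_maps_to (g := fun p => c3 p) (t := Finset.range 4)
    (fun p _ => Finset.mem_range.mpr (hle p)) (fun p => m.descFactorial (c3 p))]
  have inner : ∀ j, ∑ p ∈ Q.filter (fun p => c3 p = j), m.descFactorial (c3 p)
      = (Q.filter fun p => c3 p = j).card * m.descFactorial j := by
    intro j
    rw [Finset.sum_congr rfl (fun p hp => by rw [(Finset.mem_filter.1 hp).2]),
      Finset.sum_const, smul_eq_mul]
  rw [Finset.sum_range_succ, Finset.sum_range_succ, Finset.sum_range_succ,
    Finset.sum_range_succ, Finset.sum_range_zero, inner 0, inner 1, inner 2, inner 3]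
  ring

end CK

theorem c_k_of_three_cycle (n : ℕ) (β : Equiv.Perm (Fin n))
    (hβ : β.IsCycle ∧ β.support.card = 3) :
    (3 ≤ n → kcomm 0 β = 3 * Nat.factorial (n - 3)) ∧
    (3 ≤ n → kcomm 3 β = (3 * (n - 3) + 1) * (3 * Nat.factorial (n - 3))) ∧
    (4 ≤ n → kcomm 4 β = 3 * (n - 3) * (3 * Nat.factorial (n - 3))) ∧
    (5 ≤ n → kcomm 5 β = 6 * Nat.choose (n - 3) 2 * (3 * Nat.factorial (n - 3))) ∧
    (6 ≤ n → kcomm 6 β = 2 * Nat.choose (n - 3) 3 * (3 * Nat.factorial (n - 3))) ∧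
    (∀ k, 7 ≤ k → k ≤ n → kcomm k β = 0) := by
  classical
  obtain ⟨hc, hcard⟩ := hβ
  have hβ3 : β ^ 3 = 1 := by
    rw [← hcard, ← hc.orderOf]
    exact pow_orderOf_eq_one β
  obtain ⟨b, hb, -⟩ := id hc
  have h31 : β (β (β b)) = b := by
    have h := congrArg (fun f : Equiv.Perm (Fin n) => f b) hβ3
    simpa [pow_succ, Equiv.Perm.mul_apply] using h
  have d12 : b ≠ β b := Ne.symm hb
  have d13 : b ≠ β (β b) := by
    intro e
    have h2 := congrArg β e
    rw [h31] at h2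
    exact hb h2
  have d23 : β b ≠ β (β b) := fun e => hb (β.injective e).symm
  have m1 : b ∈ β.support := Equiv.Perm.mem_support.mpr hb
  have m2 : β b ∈ β.support := Equiv.Perm.apply_mem_support.mpr m1
  have m3 : β (β b) ∈ β.support := Equiv.Perm.apply_mem_support.mpr m2
  have hsub : ({b, β b, β (β b)} : Finset (Fin n)) ⊆ β.support := by
    intro a ha
    simp only [Finset.mem_insert, Finset.mem_singleton] at ha
    rcases ha with rfl | rfl | rfl <;> assumption
  have hcard3 : ({b, β b, β (β b)} : Finset (Fin n)).card = 3 :=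
    Finset.card_eq_three.mpr ⟨_, _, _, d12, d13, d23, rfl⟩
  have hle : β.support.card ≤ ({b, β b, β (β b)} : Finset (Fin n)).card := by
    rw [hcard, hcard3]
  have heq : β.support = {b, β b, β (β b)} :=
    (Finset.eq_of_subset_of_card_le hsub hle).symm
  have hfix : ∀ a, a ≠ b → a ≠ β b → a ≠ β (β b) → β a = a := by
    intro a h1 h2 h3
    apply Equiv.Perm.notMem_support.mp
    rw [heq]
    simp [h1, h2, h3]
  set Γ : CK.Ctx n := ⟨β, b, β b, β (β b), rfl, rfl, h31, d12, d13, d23, hfix⟩ with hΓ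
  have hle6 : ∀ p : Fin 4 × Fin 4 × Fin 4, CK.hval p ≤ 6 := by decide
  refine ⟨?_, ?_, ?_, ?_, ?_, ?_⟩
  · intro _
    show kcomm 0 Γ.β = _
    rw [CK.kcomm_eq Γ 0, CK.Tk_card Γ 0, CK.sum_desc]
    rw [show ((Finset.univ.filter fun p : Fin 4 × Fin 4 × Fin 4 =>
        CK.valid p ∧ CK.hval p = 0).filter fun p => CK.c3 p = 0).card = 3 from by decide,
      show ((Finset.univ.filter fun p : Fin 4 × Fin 4 × Fin 4 =>
        CK.valid p ∧ CK.hval p = 0).filter fun p => CK.c3 p = 1).card = 0 from by decide,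
      show ((Finset.univ.filter fun p : Fin 4 × Fin 4 × Fin 4 =>
        CK.valid p ∧ CK.hval p = 0).filter fun p => CK.c3 p = 2).card = 0 from by decide,
      show ((Finset.univ.filter fun p : Fin 4 × Fin 4 × Fin 4 =>
        CK.valid p ∧ CK.hval p = 0).filter fun p => CK.c3 p = 3).card = 0 from by decide,
      Nat.descFactorial_zero]
    ring
  · intro _
    show kcomm 3 Γ.β = _
    rw [CK.kcomm_eq Γ 3, CK.Tk_card Γ 3, CK.sum_desc]
    rw [show ((Finset.univ.filter fun p : Fin 4 × Fin 4 × Fin 4 =>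
        CK.valid p ∧ CK.hval p = 3).filter fun p => CK.c3 p = 0).card = 3 from by decide,
      show ((Finset.univ.filter fun p : Fin 4 × Fin 4 × Fin 4 =>
        CK.valid p ∧ CK.hval p = 3).filter fun p => CK.c3 p = 1).card = 9 from by decide,
      show ((Finset.univ.filter fun p : Fin 4 × Fin 4 × Fin 4 =>
        CK.valid p ∧ CK.hval p = 3).filter fun p => CK.c3 p = 2).card = 0 from by decide,
      show ((Finset.univ.filter fun p : Fin 4 × Fin 4 × Fin 4 =>
        CK.valid p ∧ CK.hval p = 3).filter fun p => CK.c3 p = 3).card = 0 from by decide,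
      Nat.descFactorial_one, Nat.descFactorial_zero]
    ring
  · intro _
    show kcomm 4 Γ.β = _
    rw [CK.kcomm_eq Γ 4, CK.Tk_card Γ 4, CK.sum_desc]
    rw [show ((Finset.univ.filter fun p : Fin 4 × Fin 4 × Fin 4 =>
        CK.valid p ∧ CK.hval p = 4).filter fun p => CK.c3 p = 0).card = 0 from by decide,
      show ((Finset.univ.filter fun p : Fin 4 × Fin 4 × Fin 4 =>
        CK.valid p ∧ CK.hval p = 4).filter fun p => CK.c3 p = 1).card = 9 from by decide,
      show ((Finset.univ.filter fun p : Fin 4 × Fin 4 × Fin 4 =>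
        CK.valid p ∧ CK.hval p = 4).filter fun p => CK.c3 p = 2).card = 0 from by decide,
      show ((Finset.univ.filter fun p : Fin 4 × Fin 4 × Fin 4 =>
        CK.valid p ∧ CK.hval p = 4).filter fun p => CK.c3 p = 3).card = 0 from by decide,
      Nat.descFactorial_one]
    ring
  · intro _
    show kcomm 5 Γ.β = _
    rw [CK.kcomm_eq Γ 5, CK.Tk_card Γ 5, CK.sum_desc]
    rw [show ((Finset.univ.filter fun p : Fin 4 × Fin 4 × Fin 4 =>
        CK.valid p ∧ CK.hval p = 5).filter fun p => CK.c3 p = 0).card = 0 from by decide,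
      show ((Finset.univ.filter fun p : Fin 4 × Fin 4 × Fin 4 =>
        CK.valid p ∧ CK.hval p = 5).filter fun p => CK.c3 p = 1).card = 0 from by decide,
      show ((Finset.univ.filter fun p : Fin 4 × Fin 4 × Fin 4 =>
        CK.valid p ∧ CK.hval p = 5).filter fun p => CK.c3 p = 2).card = 9 from by decide,
      show ((Finset.univ.filter fun p : Fin 4 × Fin 4 × Fin 4 =>
        CK.valid p ∧ CK.hval p = 5).filter fun p => CK.c3 p = 3).card = 0 from by decide,
      Nat.descFactorial_eq_factorial_mul_choose (n - 3) 2]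
    simp only [Nat.factorial]
    ring
  · intro _
    show kcomm 6 Γ.β = _
    rw [CK.kcomm_eq Γ 6, CK.Tk_card Γ 6, CK.sum_desc]
    rw [show ((Finset.univ.filter fun p : Fin 4 × Fin 4 × Fin 4 =>
        CK.valid p ∧ CK.hval p = 6).filter fun p => CK.c3 p = 0).card = 0 from by decide,
      show ((Finset.univ.filter fun p : Fin 4 × Fin 4 × Fin 4 =>
        CK.valid p ∧ CK.hval p = 6).filter fun p => CK.c3 p = 1).card = 0 from by decide,
      show ((Finset.univ.filter fun p : Fin 4 × Fin 4 × Fin 4 =>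
        CK.valid p ∧ CK.hval p = 6).filter fun p => CK.c3 p = 2).card = 0 from by decide,
      show ((Finset.univ.filter fun p : Fin 4 × Fin 4 × Fin 4 =>
        CK.valid p ∧ CK.hval p = 6).filter fun p => CK.c3 p = 3).card = 1 from by decide,
      Nat.descFactorial_eq_factorial_mul_choose (n - 3) 3]
    simp only [Nat.factorial]
    ring
  · intro k hk _
    show kcomm k Γ.β = 0
    rw [CK.kcomm_eq Γ k, CK.Tk_card Γ k]
    have hempty : (Finset.univ.filter fun p : Fin 4 × Fin 4 × Fin 4 =>
        CK.valid p ∧ CK.hval p = k) = ∅ := by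
      apply Finset.filter_eq_empty_iff.mpr
      intro p _
      rintro ⟨-, hv⟩
      have := hle6 p
      omega
    rw [hempty]
    simp
end

section
/- For every integer k ≥ 4, S(k−2) = (k−2)·D(k−2) + (2k−5)·D(k−3) + (k−3)·D(k−4), where D(j) is the number of cyclic permutations of {1,…,j} with no point i mapped to i+1 (mod j), and S(m) is the number of permutations of {1,…,m} without a succession. -/
/-- `D k` is the number of cyclic permutations `σ` of `{1, …, k}` (permutations
consisting of a single `k`-cycle) such that `σ i ≠ i + 1 (mod k)` for all `i`
(OEIS A000757, with `D 0 = 1` counting the empty cyclic permutation). -/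
noncomputable def D : ℕ → ℕ
  | 0 => 1
  | (k + 1) => Nat.card {σ : Equiv.Perm (Fin (k + 1)) //
      σ.IsCycle ∧ σ.support.card = k + 1 ∧ ∀ i : Fin (k + 1), σ i ≠ i + 1}

/-- `S m` is the number of permutations of `{1, …, m}` without a succession,
i.e. with no index `i` such that `π (i+1) = π i + 1` (OEIS A000255(m-1)). -/
def S (m : ℕ) : ℕ :=
  (Finset.univ.filter fun π : Equiv.Perm (Fin m) =>
    ∀ i j : Fin m, (j : ℕ) = (i : ℕ) + 1 → ((π j : ℕ) ≠ (π i : ℕ) + 1)).card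

open Equiv Equiv.Perm Finset
open scoped Fin.NatCast Fin.CommRing

namespace SuccAux


def cyc {L : ℕ} (w : Perm (Fin L)) : Perm (Fin L) := w * finRotate L * w⁻¹

lemma cyc_apply {L : ℕ} (w : Perm (Fin (L + 1))) (i : Fin (L + 1)) :
    cyc w (w i) = w (i + 1) := by
  simp [cyc, Perm.mul_apply]

lemma cyc_pow_apply {L : ℕ} (w : Perm (Fin (L + 1))) (t : ℕ) (i : Fin (L + 1)) :
    (cyc w ^ t) (w i) = w (i + (t : Fin (L + 1))) := by
  induction t with
  | zero => simp
  | succ t ih =>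
      have : (cyc w ^ (t + 1)) (w i) = cyc w ((cyc w ^ t) (w i)) := by
        rw [pow_succ', Perm.mul_apply]
      rw [this, ih, cyc_apply]
      congr 1
      push_cast
      ring

lemma cyc_isCycle {L : ℕ} (w : Perm (Fin (L + 2))) : (cyc w).IsCycle :=
  isCycle_finRotate.conj

lemma cyc_support_card {L : ℕ} (w : Perm (Fin (L + 2))) :
    (cyc w).support.card = L + 2 := by
  unfold cyc
  rw [card_support_conj]
  simp [support_finRotate]

lemma isCycleOn_univ {L : ℕ} {σ : Perm (Fin L)} (hc : σ.IsCycle) (hs : σ.support.card = L) :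
    σ.IsCycleOn (univ : Finset (Fin L)) := by
  have h1 : σ.support = univ := Finset.eq_univ_of_card _ (by simpa using hs)
  have h2 := hc.isCycleOn
  convert h2 using 1
  ext x
  simp [← h1, mem_support]

lemma pow_mod_apply {L : ℕ} {σ : Perm (Fin (L + 2))}
    (hco : σ.IsCycleOn (univ : Finset (Fin (L + 2)))) (a : Fin (L + 2)) {s t : ℕ}
    (h : s ≡ t [MOD L + 2]) : (σ ^ s) a = (σ ^ t) a := by
  refine (hco.pow_apply_eq_pow_apply (Finset.mem_univ a)).mpr ?_
  simpa [Finset.card_univ] using h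

lemma pow_inj {L : ℕ} {σ : Perm (Fin (L + 2))}
    (hco : σ.IsCycleOn (univ : Finset (Fin (L + 2)))) (a : Fin (L + 2)) {s t : ℕ}
    (hs : s < L + 2) (ht : t < L + 2) (h : (σ ^ s) a = (σ ^ t) a) : s = t := by
  have h2 := (hco.pow_apply_eq_pow_apply (Finset.mem_univ a)).mp h
  rw [Finset.card_univ, Fintype.card_fin] at h2
  unfold Nat.ModEq at h2
  rwa [Nat.mod_eq_of_lt hs, Nat.mod_eq_of_lt ht] at h2

noncomputable def wordOf {L : ℕ} {σ : Perm (Fin (L + 2))}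
    (hc : σ.IsCycle) (hs : σ.support.card = L + 2) (p a : Fin (L + 2)) : Perm (Fin (L + 2)) :=
  Equiv.ofBijective (fun i => (σ ^ ((i - p : Fin (L + 2)) : ℕ)) a)
    (Finite.injective_iff_bijective.mp (by
      intro i j h
      have hco := isCycleOn_univ hc hs
      have h2 := pow_inj hco a (Fin.is_lt _) (Fin.is_lt _) h
      have h3 : i - p = j - p := Fin.ext h2
      exact sub_left_inj.mp h3))

lemma wordOf_apply {L : ℕ} {σ : Perm (Fin (L + 2))}
    (hc : σ.IsCycle) (hs : σ.support.card = L + 2) (p a : Fin (L + 2)) (i : Fin (L + 2)) :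
    wordOf hc hs p a i = (σ ^ ((i - p : Fin (L + 2)) : ℕ)) a := rfl

lemma wordOf_p {L : ℕ} {σ : Perm (Fin (L + 2))}
    (hc : σ.IsCycle) (hs : σ.support.card = L + 2) (p a : Fin (L + 2)) :
    wordOf hc hs p a p = a := by
  rw [wordOf_apply]
  simp

lemma cyc_wordOf {L : ℕ} {σ : Perm (Fin (L + 2))}
    (hc : σ.IsCycle) (hs : σ.support.card = L + 2) (p a : Fin (L + 2)) :
    cyc (wordOf hc hs p a) = σ := by
  have hco := isCycleOn_univ hc hs
  have key : wordOf hc hs p a * finRotate (L + 2) = σ * wordOf hc hs p a := by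
    apply Equiv.ext
    intro i
    rw [Perm.mul_apply, Perm.mul_apply, finRotate_succ_apply, wordOf_apply, wordOf_apply]
    rw [← Perm.mul_apply σ, ← pow_succ']
    apply pow_mod_apply hco
    have : i + 1 - p = (i - p) + 1 := by ring
    rw [this, Fin.val_add]
    simp only [Fin.val_one]
    exact Nat.mod_modEq _ _
  unfold cyc
  rw [key, mul_assoc]
  simp

lemma wordOf_cyc {L : ℕ} (w : Perm (Fin (L + 2))) (p a : Fin (L + 2)) (hw : w p = a)
    (hc : (cyc w).IsCycle) (hs : (cyc w).support.card = L + 2) :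
    wordOf hc hs p a = w := by
  apply Equiv.ext
  intro i
  rw [wordOf_apply, ← hw, cyc_pow_apply, Fin.cast_val_eq_self]
  congr 1
  abel

lemma card_marked {L : ℕ} (P : Perm (Fin (L + 2)) → Prop) [DecidablePred P] (p a : Fin (L + 2)) :
    ((univ : Finset (Perm (Fin (L + 2)))).filter fun w => P (cyc w) ∧ w p = a).card
      = Nat.card {σ : Perm (Fin (L + 2)) // σ.IsCycle ∧ σ.support.card = L + 2 ∧ P σ} := by
  have h1 : ((univ : Finset (Perm (Fin (L + 2)))).filter fun w => P (cyc w) ∧ w p = a).card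
      = Nat.card {w : Perm (Fin (L + 2)) // P (cyc w) ∧ w p = a} := by
    rw [Nat.card_eq_fintype_card, Fintype.card_subtype]
  rw [h1]
  apply Nat.card_congr
  refine ⟨fun w => ⟨cyc w.1, cyc_isCycle _, cyc_support_card _, w.2.1⟩,
    fun σ => ⟨wordOf σ.2.1 σ.2.2.1 p a, ?_, wordOf_p _ _ _ _⟩, ?_, ?_⟩
  · rw [cyc_wordOf]
    exact σ.2.2.2
  · intro w
    apply Subtype.ext
    exact wordOf_cyc w.1 p a w.2.2 (cyc_isCycle _) (cyc_support_card _)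
  · intro σ
    apply Subtype.ext
    exact cyc_wordOf σ.2.1 σ.2.2.1 p a



lemma pow_finRotate_apply {L : ℕ} (t : ℕ) (x : Fin (L + 1)) :
    ((finRotate (L + 1)) ^ t) x = x + (t : Fin (L + 1)) := by
  induction t with
  | zero => simp
  | succ t ih =>
      rw [pow_succ', Perm.mul_apply, ih, finRotate_succ_apply]
      push_cast
      ring

abbrev VE1 {L : ℕ} (σ : Perm (Fin (L + 1))) (v : Fin (L + 1)) : Prop :=
  ∀ x, σ x = x + 1 ↔ x = v

abbrev VE2 {L : ℕ} (σ : Perm (Fin (L + 1))) (a b : Fin (L + 1)) : Prop :=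
  ∀ x, σ x = x + 1 ↔ (x = a ∨ x = b)

lemma conj_count {L : ℕ} (g : Perm (Fin L)) (P Q : Perm (Fin L) → Prop)
    (h : ∀ σ, P σ ↔ Q (g * σ * g⁻¹)) :
    Nat.card {σ : Perm (Fin L) // σ.IsCycle ∧ σ.support.card = L ∧ P σ}
      = Nat.card {σ : Perm (Fin L) // σ.IsCycle ∧ σ.support.card = L ∧ Q σ} := by
  apply Nat.card_congr
  refine ⟨fun σ => ⟨g * σ.1 * g⁻¹, σ.2.1.conj, by rw [card_support_conj]; exact σ.2.2.1,
      (h _).mp σ.2.2.2⟩,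
    fun τ => ⟨g⁻¹ * τ.1 * g, by simpa using τ.2.1.conj (g := g⁻¹),
      by rw [show g⁻¹ * τ.1 * g = g⁻¹ * τ.1 * g⁻¹⁻¹ by group, card_support_conj]; exact τ.2.2.1,
      (h _).mpr (by rw [show g * (g⁻¹ * τ.1 * g) * g⁻¹ = τ.1 by group]; exact τ.2.2.2)⟩,
    fun σ => by apply Subtype.ext; simp only; group,
    fun τ => by apply Subtype.ext; simp only; group⟩

lemma X_rot {L : ℕ} (v v' : Fin (L + 2)) :
    Nat.card {σ : Perm (Fin (L + 2)) // σ.IsCycle ∧ σ.support.card = L + 2 ∧ VE1 σ v}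
      = Nat.card {σ : Perm (Fin (L + 2)) // σ.IsCycle ∧ σ.support.card = L + 2 ∧ VE1 σ v'} := by
  set j : Fin (L + 2) := v' - v with hj
  set g : Perm (Fin (L + 2)) := (finRotate (L + 2)) ^ (j : ℕ) with hg
  have hgapp : ∀ y : Fin (L + 2), g y = y + j := by
    intro y; rw [hg, pow_finRotate_apply, Fin.cast_val_eq_self]
  have hginv : ∀ x : Fin (L + 2), g⁻¹ x = x - j := by
    intro x
    apply g.injective
    rw [← Perm.mul_apply, mul_inv_cancel, Perm.one_apply, hgapp]
    ring
  apply conj_count g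
  intro σ
  have key : ∀ x, (g * σ * g⁻¹) x = x + 1 ↔ σ (x - j) = (x - j) + 1 := by
    intro x
    rw [Perm.mul_apply, Perm.mul_apply, hginv, hgapp]
    constructor
    · intro h
      have : σ (x - j) = x + 1 - j := by
        apply_fun (· + j) using fun a b => by simpa using congrArg (· - j)
        simpa using h
      rw [this]; ring
    · intro h
      rw [h]; ring
  constructor
  · intro H x
    rw [key, H (x - j)]
    constructor
    · intro h
      have hx : x = v + j := eq_add_of_sub_eq h
      rw [hx, hj]; ring
    · intro h; rw [h, hj]; ring
  · intro H y
    have h3 := H (y + j)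
    rw [key] at h3
    have h4 : y + j - j = y := by ring
    rw [h4] at h3
    rw [h3]
    constructor
    · intro h
      have h5 : y = v' - j := eq_sub_of_add_eq h
      rw [h5, hj]; ring
    · intro h; rw [h, hj]; ring


/-- the gluing map `Fin (m+3) → Fin (m+2)`, `u ↦ u - 1` for `u ≥ 1`, `0 ↦ last`. -/
def dl {m : ℕ} (u : Fin (m + 3)) : Fin (m + 2) :=
  if (u : ℕ) = 0 then Fin.last (m + 1) else ⟨(u : ℕ) - 1, by omega⟩

lemma dl_val {m : ℕ} (u : Fin (m + 3)) :
    (dl u : ℕ) = if (u : ℕ) = 0 then m + 1 else (u : ℕ) - 1 := by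
  unfold dl
  split <;> simp [Fin.last]

/-- partial inverse of `dl` avoiding `top`. -/
def ps {m : ℕ} (y : Fin (m + 2)) : Fin (m + 3) :=
  if (y : ℕ) = m + 1 then 0 else ⟨(y : ℕ) + 1, by omega⟩

lemma ps_ne_top {m : ℕ} (y : Fin (m + 2)) : ps y ≠ Fin.last (m + 2) := by
  unfold ps
  split
  · intro h
    rw [Fin.ext_iff] at h
    simp [Fin.last] at h
  · intro h
    rw [Fin.ext_iff] at h
    simp only [Fin.last] at h
    omega

lemma dl_ps {m : ℕ} (y : Fin (m + 2)) : dl (ps y) = y := by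
  unfold ps
  apply Fin.ext
  rw [dl_val]
  split
  · rename_i h
    simp [Fin.last]
    omega
  · rename_i h
    simp only
    split
    · omega
    · simp

lemma dl_succ_iff {m : ℕ} (u x : Fin (m + 3)) (hu : u ≠ Fin.last (m + 2)) (hx : x ≠ 0) :
    dl x = dl u + 1 ↔ x = u + 1 := by
  have hu' : (u : ℕ) < m + 2 := by
    rcases Fin.lt_last_iff_ne_last.mpr hu with h
    simpa [Fin.lt_def, Fin.last] using h
  have hx' : 1 ≤ (x : ℕ) := by
    rcases Nat.pos_of_ne_zero (n := (x : ℕ)) (fun h => hx (Fin.ext (by simpa using h))) with h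
    exact h
  rw [Fin.ext_iff, Fin.ext_iff, Fin.val_add, Fin.val_add, Fin.val_one, Fin.val_one, dl_val, dl_val]
  have hx0 : ¬ ((x : ℕ) = 0) := by omega
  rw [if_neg hx0]
  rcases Nat.eq_zero_or_pos (u : ℕ) with h0 | h0
  · rw [if_pos h0]
    rw [Nat.mod_eq_of_lt (by omega : (u:ℕ) + 1 < m + 3)]
    have : (m + 1 + 1) % (m + 2) = 0 := by simp
    rw [this]
    omega
  · rw [if_neg (by omega)]
    rw [Nat.mod_eq_of_lt (by omega : (u:ℕ) + 1 < m + 3)]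
    rw [Nat.mod_eq_of_lt (by omega : (u:ℕ) - 1 + 1 < m + 2)]
    omega

lemma dl_inj {m : ℕ} (u x : Fin (m + 3)) (hu : u ≠ Fin.last (m + 2)) (hx : x ≠ Fin.last (m + 2)) :
    dl x = dl u ↔ x = u := by
  have hu' : (u : ℕ) < m + 2 := by simpa [Fin.lt_def, Fin.last] using Fin.lt_last_iff_ne_last.mpr hu
  have hx' : (x : ℕ) < m + 2 := by simpa [Fin.lt_def, Fin.last] using Fin.lt_last_iff_ne_last.mpr hx
  rw [Fin.ext_iff, Fin.ext_iff, dl_val, dl_val]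
  split <;> split <;> omega


noncomputable def toWord {m : ℕ} (w : Perm (Fin (m + 3))) (hw0 : w 0 = 0) : Perm (Fin (m + 2)) :=
  Equiv.ofBijective
    (fun i => (w i.succ).pred (by
      intro h
      have : w i.succ = w 0 := by rw [h, hw0]
      exact Fin.succ_ne_zero i (w.injective this)))
    (Finite.injective_iff_bijective.mp (by
      intro i j h
      have h2 : w i.succ = w j.succ := by
        have := congrArg Fin.succ h
        simpa [Fin.succ_pred] using this
      exact Fin.succ_injective _ (w.injective h2)))

lemma toWord_apply {m : ℕ} (w : Perm (Fin (m + 3))) (hw0 : w 0 = 0) (i : Fin (m + 2)) :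
    (toWord w hw0 i).succ = w i.succ := by
  simp [toWord, Equiv.ofBijective]

noncomputable def fromW {m : ℕ} (w' : Perm (Fin (m + 2))) : Perm (Fin (m + 3)) :=
  Equiv.ofBijective
    (fun x => if h : x = 0 then 0 else (w' (x.pred h)).succ)
    (Finite.injective_iff_bijective.mp (by
      intro i j h
      simp only at h
      by_cases hi : i = 0 <;> by_cases hj : j = 0
      · rw [hi, hj]
      · rw [dif_pos hi, dif_neg hj] at h
        exact absurd h.symm (Fin.succ_ne_zero _)
      · rw [dif_neg hi, dif_pos hj] at h
        exact absurd h (Fin.succ_ne_zero _)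
      · rw [dif_neg hi, dif_neg hj] at h
        have := w'.injective (Fin.succ_injective _ h)
        rw [← Fin.succ_pred i hi, ← Fin.succ_pred j hj, this]))

lemma fromW_zero {m : ℕ} (w' : Perm (Fin (m + 2))) : fromW w' 0 = 0 := by
  simp [fromW, Equiv.ofBijective]

lemma fromW_succ {m : ℕ} (w' : Perm (Fin (m + 2))) (i : Fin (m + 2)) :
    fromW w' i.succ = (w' i).succ := by
  simp only [fromW, Equiv.ofBijective]
  simp [Fin.succ_ne_zero, Fin.pred_succ]

lemma toWord_fromW {m : ℕ} (w' : Perm (Fin (m + 2))) :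
    toWord (fromW w') (fromW_zero w') = w' := by
  apply Equiv.ext
  intro i
  have h := toWord_apply (fromW w') (fromW_zero w') i
  rw [fromW_succ] at h
  exact Fin.succ_injective _ h

lemma fromW_toWord {m : ℕ} (w : Perm (Fin (m + 3))) (hw0 : w 0 = 0) :
    fromW (toWord w hw0) = w := by
  apply Equiv.ext
  intro x
  rcases Fin.eq_zero_or_eq_succ x with h | ⟨j, rfl⟩
  · rw [h, fromW_zero, hw0]
  · rw [fromW_succ, toWord_apply]


lemma toWord_eq_dl {m : ℕ} (w : Perm (Fin (m + 3))) (hw0 : w 0 = 0) (i : Fin (m + 2)) :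
    toWord w hw0 i = dl (w i.succ) := by
  have h := toWord_apply w hw0 i
  have hne : (w i.succ : ℕ) ≠ 0 := by
    intro hc
    have : w i.succ = w 0 := by rw [hw0]; exact Fin.ext (by simpa using hc)
    exact Fin.succ_ne_zero i (w.injective this)
  apply Fin.ext
  rw [dl_val, if_neg hne]
  have hv := congrArg Fin.val h
  simp only [Fin.val_succ] at hv
  omega

lemma sigma_top {m : ℕ} (w : Perm (Fin (m + 3))) (hw0 : w 0 = 0)
    (hwl : w (Fin.last (m + 2)) = Fin.last (m + 2)) :
    cyc w (Fin.last (m + 2)) = 0 := by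
  nth_rewrite 1 [← hwl]
  rw [cyc_apply, Fin.last_add_one, hw0]

lemma sigma_zero_iff {m : ℕ} (w : Perm (Fin (m + 3))) (hw0 : w 0 = 0)
    (hwl : w (Fin.last (m + 2)) = Fin.last (m + 2)) (u : Fin (m + 3)) :
    cyc w u = 0 ↔ u = Fin.last (m + 2) := by
  constructor
  · intro h
    apply (cyc w).injective
    rw [h, sigma_top w hw0 hwl]
  · rintro rfl
    exact sigma_top w hw0 hwl

lemma w_last_eq {m : ℕ} (w : Perm (Fin (m + 3))) (hw0 : w 0 = 0)
    (htop : cyc w (Fin.last (m + 2)) = Fin.last (m + 2) + 1) :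
    w (Fin.last (m + 2)) = Fin.last (m + 2) := by
  set i := w.symm (Fin.last (m + 2)) with hi
  have hwi : w i = Fin.last (m + 2) := w.apply_symm_apply _
  have h1 : w (i + 1) = w 0 := by
    rw [← cyc_apply, hwi, htop, Fin.last_add_one, hw0]
  have h2 : i + 1 = 0 := w.injective h1
  have h3 : i = Fin.last (m + 2) := by
    have := Fin.last_add_one (m + 2)
    apply add_right_cancel (b := (1 : Fin (m+3)))
    rw [h2, this]
  rw [← h3, hwi, h3]

lemma comm_dl {m : ℕ} (w : Perm (Fin (m + 3))) (hw0 : w 0 = 0)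
    (hwl : w (Fin.last (m + 2)) = Fin.last (m + 2)) (u : Fin (m + 3))
    (hu : u ≠ Fin.last (m + 2)) :
    cyc (toWord w hw0) (dl u) = dl (cyc w u) := by
  set w' := toWord w hw0 with hw'
  set i := w.symm u with hi
  have hwi : w i = u := w.apply_symm_apply _
  have hil : i ≠ Fin.last (m + 2) := by
    intro hc
    rw [hc, hwl] at hwi
    exact hu hwi.symm
  rcases Fin.eq_zero_or_eq_succ i with h0 | ⟨j, hj⟩
  · -- u = 0
    have hu0 : u = 0 := by rw [← hwi, h0, hw0]
    have hA : w' (Fin.last (m + 1)) = Fin.last (m + 1) := by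
      rw [toWord_eq_dl, Fin.succ_last, hwl]
      apply Fin.ext
      rw [dl_val, if_neg (by simp [Fin.last])]
      simp [Fin.last]
    have hL : cyc w' (Fin.last (m + 1)) = w' 0 := by
      nth_rewrite 1 [← hA]
      rw [cyc_apply, Fin.last_add_one]
    have hdl0 : dl u = Fin.last (m + 1) := by
      rw [hu0]
      apply Fin.ext
      rw [dl_val]
      simp [Fin.last]
    rw [hdl0, hL]
    have hσ : cyc w u = w 1 := by
      rw [hu0, ← hw0, cyc_apply, zero_add]
    rw [hσ, toWord_eq_dl]
    congr 1
  · -- i = j.succ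
    have hjl : j ≠ Fin.last (m + 1) := by
      intro hc
      rw [hc, Fin.succ_last] at hj
      exact hil hj
    have hdlu : dl u = w' j := by
      rw [toWord_eq_dl, ← hj, hwi]
    have hstep : j.succ + 1 = (j + 1).succ := by
      apply Fin.ext
      have hjv : (j : ℕ) < m + 1 := by
        simpa [Fin.lt_def, Fin.last] using Fin.lt_last_iff_ne_last.mpr hjl
      have e1 : ((j : ℕ) + 1 + 1) % (m + 3) = (j : ℕ) + 1 + 1 := Nat.mod_eq_of_lt (by omega)
      have e2 : ((j : ℕ) + 1) % (m + 2) = (j : ℕ) + 1 := Nat.mod_eq_of_lt (by omega)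
      simp only [Fin.val_add, Fin.val_succ, Fin.val_one, e1, e2]
    rw [hdlu, cyc_apply, toWord_eq_dl]
    congr 1
    rw [← hstep, ← hj, ← hwi, cyc_apply]

lemma viol_iff {m : ℕ} (w : Perm (Fin (m + 3))) (hw0 : w 0 = 0)
    (hwl : w (Fin.last (m + 2)) = Fin.last (m + 2)) (u : Fin (m + 3))
    (hu : u ≠ Fin.last (m + 2)) :
    cyc w u = u + 1 ↔ cyc (toWord w hw0) (dl u) = dl u + 1 := by
  rw [comm_dl w hw0 hwl u hu]
  constructor
  · intro h
    rw [h]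
    exact (dl_succ_iff u (u + 1) hu (by
      intro hc
      have : u = Fin.last (m + 2) := by
        apply add_right_cancel (b := (1 : Fin (m + 3)))
        rw [hc, Fin.last_add_one]
      exact hu this)).mpr rfl
  · intro h
    refine (dl_succ_iff u (cyc w u) hu ?_).mp h
    intro hc
    exact hu ((sigma_zero_iff w hw0 hwl u).mp hc)


lemma card_phi {m : ℕ} (G : Fin (m + 2) → Prop) [DecidablePred G] :
    ((univ : Finset (Perm (Fin (m + 3)))).filter fun w =>
        (cyc w (Fin.last (m + 2)) = Fin.last (m + 2) + 1 ∧
          ∀ u, u ≠ Fin.last (m + 2) → (cyc w u = u + 1 ↔ G (dl u))) ∧ w 0 = 0).card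
    = ((univ : Finset (Perm (Fin (m + 2)))).filter fun w' =>
        (∀ y, cyc w' y = y + 1 ↔ G y) ∧ w' (Fin.last (m + 1)) = Fin.last (m + 1)).card := by
  refine Finset.card_bij'
    (i := fun w hw => toWord w (by simp only [mem_filter] at hw; exact hw.2.2))
    (j := fun w' _ => fromW w') ?_ ?_ ?_ ?_
  · -- maps into target
    intro w hw
    simp only [mem_filter] at hw ⊢
    obtain ⟨-, ⟨htop, hviol⟩, hw0⟩ := hw
    have hwl : w (Fin.last (m + 2)) = Fin.last (m + 2) := w_last_eq w hw0 htop
    refine ⟨mem_univ _, ?_, ?_⟩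
    · intro y
      have h1 := viol_iff w hw0 hwl (ps y) (ps_ne_top y)
      rw [dl_ps] at h1
      rw [← h1, hviol (ps y) (ps_ne_top y), dl_ps]
    · rw [toWord_eq_dl, Fin.succ_last, hwl]
      apply Fin.ext
      rw [dl_val, if_neg (by simp [Fin.last])]
      simp [Fin.last]
  · -- maps back into source
    intro w' hw'
    simp only [mem_filter] at hw' ⊢
    obtain ⟨-, hG, hl⟩ := hw'
    have hw0 : fromW w' 0 = 0 := fromW_zero w'
    have hwl : fromW w' (Fin.last (m + 2)) = Fin.last (m + 2) := by
      have : (Fin.last (m + 2)) = (Fin.last (m + 1)).succ := (Fin.succ_last _).symm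
      rw [this, fromW_succ, hl, Fin.succ_last]
    refine ⟨mem_univ _, ⟨?_, ?_⟩, hw0⟩
    · rw [sigma_top (fromW w') hw0 hwl, Fin.last_add_one]
    · intro u hu
      have h1 := viol_iff (fromW w') hw0 hwl u hu
      rw [h1]
      have h2 : toWord (fromW w') hw0 = w' := by
        have := toWord_fromW w'
        convert this using 2
      rw [h2]
      exact hG (dl u)
  · intro w hw
    simp only [mem_filter] at hw
    exact fromW_toWord w hw.2.2
  · intro w' hw'
    have := toWord_fromW w'
    convert this using 2



lemma NS_char {m : ℕ} (w : Perm (Fin (m + 4))) :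
    (∀ i j : Fin (m + 4), (j : ℕ) = (i : ℕ) + 1 → ((w j : ℕ) ≠ (w i : ℕ) + 1)) ↔
    (∀ v, cyc w v = v + 1 → (v = Fin.last (m + 3) ∨ v = w (Fin.last (m + 3)))) := by
  constructor
  · intro hNS v hv
    by_contra hc
    push_neg at hc
    obtain ⟨hvt, hvl⟩ := hc
    set i := w.symm v with hi
    have hwi : w i = v := w.apply_symm_apply _
    have hil : i ≠ Fin.last (m + 3) := by
      intro hc2
      exact hvl (by rw [← hwi, hc2])
    have h1 : w (i + 1) = v + 1 := by rw [← cyc_apply, hwi]; exact hv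
    have hiv : (i : ℕ) < m + 3 := by
      simpa [Fin.lt_def, Fin.last] using Fin.lt_last_iff_ne_last.mpr hil
    have hvv : (v : ℕ) < m + 3 := by
      simpa [Fin.lt_def, Fin.last] using Fin.lt_last_iff_ne_last.mpr hvt
    have hj : ((i + 1 : Fin (m + 4)) : ℕ) = (i : ℕ) + 1 := by
      rw [Fin.val_add, Fin.val_one, Nat.mod_eq_of_lt (by omega)]
    have hval : ((v + 1 : Fin (m + 4)) : ℕ) = (v : ℕ) + 1 := by
      rw [Fin.val_add, Fin.val_one, Nat.mod_eq_of_lt (by omega)]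
    exact hNS i (i + 1) hj (by rw [h1, hval, hwi])
  · intro hV i j hj hEq
    have hiv : (i : ℕ) < m + 3 := by have := j.isLt; omega
    have hwiv : (w i : ℕ) < m + 3 := by have := (w j).isLt; omega
    have hji : j = i + 1 := by
      apply Fin.ext
      rw [Fin.val_add, Fin.val_one, Nat.mod_eq_of_lt (by omega)]
      exact hj
    have hwj : w j = w i + 1 := by
      apply Fin.ext
      rw [Fin.val_add, Fin.val_one, Nat.mod_eq_of_lt (by omega)]
      exact hEq
    have hviol : cyc w (w i) = w i + 1 := by
      rw [cyc_apply, ← hji, hwj]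
    rcases hV (w i) hviol with h | h
    · have := congrArg Fin.val h
      simp only [Fin.last] at this
      omega
    · have h2 : i = Fin.last (m + 3) := w.injective h
      rw [h2] at hiv
      simp [Fin.last] at hiv

lemma class_split {m : ℕ} (w : Perm (Fin (m + 4)))
    (hNS : ∀ v, cyc w v = v + 1 → (v = Fin.last (m + 3) ∨ v = w (Fin.last (m + 3)))) :
    (∀ x, cyc w x ≠ x + 1) ∨ (VE1 (cyc w) (Fin.last (m + 3))) ∨
    (w (Fin.last (m + 3)) ≠ Fin.last (m + 3) ∧ VE1 (cyc w) (w (Fin.last (m + 3)))) ∨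
    (w (Fin.last (m + 3)) ≠ Fin.last (m + 3) ∧
      VE2 (cyc w) (Fin.last (m + 3)) (w (Fin.last (m + 3)))) := by
  by_cases ha : cyc w (Fin.last (m + 3)) = Fin.last (m + 3) + 1
  · by_cases hb : cyc w (w (Fin.last (m + 3))) = w (Fin.last (m + 3)) + 1
    · by_cases hc : w (Fin.last (m + 3)) = Fin.last (m + 3)
      · refine Or.inr (Or.inl ?_)
        intro x
        constructor
        · intro h
          rcases hNS x h with h2 | h2
          · exact h2
          · rw [hc] at h2; exact h2
        · rintro rfl; exact ha
      · exact Or.inr (Or.inr (Or.inr ⟨hc, fun x =>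
          ⟨fun h => hNS x h, fun h => by rcases h with rfl | rfl; exacts [ha, hb]⟩⟩))
    · refine Or.inr (Or.inl ?_)
      intro x
      constructor
      · intro h
        rcases hNS x h with h2 | h2
        · exact h2
        · rw [h2] at h; exact absurd h hb
      · rintro rfl; exact ha
  · by_cases hb : cyc w (w (Fin.last (m + 3))) = w (Fin.last (m + 3)) + 1
    · have hc : w (Fin.last (m + 3)) ≠ Fin.last (m + 3) := by
        intro hc
        rw [hc] at hb
        exact ha hb
      refine Or.inr (Or.inr (Or.inl ⟨hc, fun x => ⟨fun h => ?_, fun h => by rw [h]; exact hb⟩⟩))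
      rcases hNS x h with h2 | h2
      · rw [h2] at h; exact absurd h ha
      · exact h2
    · refine Or.inl (fun x h => ?_)
      rcases hNS x h with h2 | h2
      · rw [h2] at h; exact ha h
      · rw [h2] at h; exact hb h


lemma D1 : D 1 = 0 := by
  rw [show D 1 = Nat.card {σ : Equiv.Perm (Fin 1) //
      σ.IsCycle ∧ σ.support.card = 1 ∧ ∀ i : Fin 1, σ i ≠ i + 1} from rfl]
  have : IsEmpty {σ : Equiv.Perm (Fin 1) //
      σ.IsCycle ∧ σ.support.card = 1 ∧ ∀ i : Fin 1, σ i ≠ i + 1} := by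
    constructor
    rintro ⟨σ, hc, hs, hv⟩
    exact Equiv.Perm.card_support_ne_one σ hs
  exact @Nat.card_of_isEmpty _ this

lemma D2 : D 2 = 0 := by
  rw [show D 2 = Nat.card {σ : Equiv.Perm (Fin 2) //
      σ.IsCycle ∧ σ.support.card = 2 ∧ ∀ i : Fin 2, σ i ≠ i + 1} from rfl]
  have : IsEmpty {σ : Equiv.Perm (Fin 2) //
      σ.IsCycle ∧ σ.support.card = 2 ∧ ∀ i : Fin 2, σ i ≠ i + 1} := by
    constructor
    rintro ⟨σ, hc, hs, hv⟩
    have hsupp : σ.support = Finset.univ := Finset.eq_univ_of_card _ (by simpa using hs)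
    have h0 : σ 0 ≠ 0 := by
      have h : (0 : Fin 2) ∈ σ.support := by rw [hsupp]; exact Finset.mem_univ _
      simpa [Equiv.Perm.mem_support] using h
    have h1 : σ 0 ≠ 1 := by simpa using hv 0
    have hall : ∀ x : Fin 2, x = 0 ∨ x = 1 := by decide
    rcases hall (σ 0) with h | h
    exacts [h0 h, h1 h]
  exact @Nat.card_of_isEmpty _ this

lemma D3 : D 3 = 1 := by
  rw [show D 3 = Nat.card {σ : Equiv.Perm (Fin 3) //
      σ.IsCycle ∧ σ.support.card = 3 ∧ ∀ i : Fin 3, σ i ≠ i + 1} from rfl]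
  have hall : ∀ x : Fin 3, x = 0 ∨ x = 1 ∨ x = 2 := by decide
  have huniq : ∀ σ : Equiv.Perm (Fin 3), σ.IsCycle → σ.support.card = 3 →
      (∀ i : Fin 3, σ i ≠ i + 1) → σ = (finRotate 3)⁻¹ := by
    intro σ hc hs hv
    have hsupp : σ.support = Finset.univ := Finset.eq_univ_of_card _ (by simpa using hs)
    have hmove : ∀ x : Fin 3, σ x ≠ x := by
      intro x
      have h : x ∈ σ.support := by rw [hsupp]; exact Finset.mem_univ _
      simpa [Equiv.Perm.mem_support] using h
    have h0 : σ 0 = 2 := by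
      rcases hall (σ 0) with h | h | h
      · exact absurd h (hmove 0)
      · exact absurd h (by simpa using hv 0)
      · exact h
    have h2 : σ 2 = 1 := by
      rcases hall (σ 2) with h | h | h
      · exact absurd h (by have := hv 2; simpa using this)
      · exact h
      · exact absurd h (hmove 2)
    have h1 : σ 1 = 0 := by
      rcases hall (σ 1) with h | h | h
      · exact h
      · exact absurd h (hmove 1)
      · exact absurd (σ.injective (h.trans h0.symm)) (by decide)
    apply Equiv.ext
    intro x
    rcases hall x with rfl | rfl | rfl
    · rw [h0]; decide
    · rw [h1]; decide
    · rw [h2]; decide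
  have hmem : ((finRotate 3)⁻¹ : Equiv.Perm (Fin 3)).IsCycle ∧
      ((finRotate 3)⁻¹ : Equiv.Perm (Fin 3)).support.card = 3 ∧
      ∀ i : Fin 3, (finRotate 3)⁻¹ i ≠ i + 1 := by
    refine ⟨(isCycle_finRotate (n := 1)).inv, ?_, by decide⟩
    rw [Equiv.Perm.support_inv]
    rw [support_finRotate (n := 1)]
    simp
  rw [Nat.card_eq_one_iff_unique]
  constructor
  · constructor
    rintro ⟨σ, hc, hs, hv⟩ ⟨τ, hc2, hs2, hv2⟩
    apply Subtype.ext
    simp only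
    rw [huniq σ hc hs hv, huniq τ hc2 hs2 hv2]
  · exact ⟨⟨_, hmem⟩⟩


lemma Xtop_eq (m : ℕ) :
    Nat.card {σ : Perm (Fin (m + 3)) // σ.IsCycle ∧ σ.support.card = m + 3 ∧
        VE1 σ (Fin.last (m + 2))} = D (m + 2) := by
  have h1 : ((univ : Finset (Perm (Fin (m + 3)))).filter
        fun w => VE1 (cyc w) (Fin.last (m + 2)) ∧ w 0 = 0).card
      = Nat.card {σ : Perm (Fin (m + 3)) // σ.IsCycle ∧ σ.support.card = m + 3 ∧
          VE1 σ (Fin.last (m + 2))} :=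
    card_marked (L := m + 1) (fun σ => VE1 σ (Fin.last (m + 2))) 0 0
  rw [← h1]
  have h2 : ((univ : Finset (Perm (Fin (m + 3)))).filter
        fun w => VE1 (cyc w) (Fin.last (m + 2)) ∧ w 0 = 0)
      = ((univ : Finset (Perm (Fin (m + 3)))).filter fun w =>
          (cyc w (Fin.last (m + 2)) = Fin.last (m + 2) + 1 ∧
            ∀ u, u ≠ Fin.last (m + 2) → (cyc w u = u + 1 ↔ False)) ∧ w 0 = 0) := by
    apply filter_congr
    intro w _
    simp only [iff_false]
    constructor
    · rintro ⟨hV, hw0⟩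
      exact ⟨⟨(hV _).mpr rfl, fun u hu h => hu ((hV u).mp h)⟩, hw0⟩
    · rintro ⟨⟨htop, hother⟩, hw0⟩
      refine ⟨fun x => ⟨fun h => ?_, fun h => by rw [h]; exact htop⟩, hw0⟩
      by_contra hx
      exact hother x hx h
  rw [h2]
  have h3 : ((univ : Finset (Perm (Fin (m + 3)))).filter fun w =>
          (cyc w (Fin.last (m + 2)) = Fin.last (m + 2) + 1 ∧
            ∀ u, u ≠ Fin.last (m + 2) → (cyc w u = u + 1 ↔ False)) ∧ w 0 = 0).card
      = ((univ : Finset (Perm (Fin (m + 2)))).filter fun w' =>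
          (∀ y, cyc w' y = y + 1 ↔ False) ∧
            w' (Fin.last (m + 1)) = Fin.last (m + 1)).card :=
    card_phi (fun _ => False)
  rw [h3]
  have h4 : ((univ : Finset (Perm (Fin (m + 2)))).filter fun w' =>
          (∀ y, cyc w' y = y + 1 ↔ False) ∧ w' (Fin.last (m + 1)) = Fin.last (m + 1))
      = ((univ : Finset (Perm (Fin (m + 2)))).filter fun w' =>
          (∀ y : Fin (m + 2), cyc w' y ≠ y + 1) ∧
            w' (Fin.last (m + 1)) = Fin.last (m + 1)) := by
    apply filter_congr
    intro w _
    simp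
  rw [h4]
  have h5 : ((univ : Finset (Perm (Fin (m + 2)))).filter fun w' =>
          (∀ y : Fin (m + 2), cyc w' y ≠ y + 1) ∧
            w' (Fin.last (m + 1)) = Fin.last (m + 1)).card
      = Nat.card {σ : Perm (Fin (m + 2)) // σ.IsCycle ∧ σ.support.card = m + 2 ∧
          ∀ y : Fin (m + 2), σ y ≠ y + 1} :=
    card_marked (L := m) (fun σ => ∀ y, σ y ≠ y + 1) (Fin.last (m + 1)) (Fin.last (m + 1))
  rw [h5]
  rfl

lemma Y_eq (m : ℕ) (v : Fin (m + 4)) (hv : v ≠ Fin.last (m + 3)) :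
    Nat.card {σ : Perm (Fin (m + 4)) // σ.IsCycle ∧ σ.support.card = m + 4 ∧
        VE2 σ (Fin.last (m + 3)) v} = D (m + 2) := by
  have h1 : ((univ : Finset (Perm (Fin (m + 4)))).filter
        fun w => VE2 (cyc w) (Fin.last (m + 3)) v ∧ w 0 = 0).card
      = Nat.card {σ : Perm (Fin (m + 4)) // σ.IsCycle ∧ σ.support.card = m + 4 ∧
          VE2 σ (Fin.last (m + 3)) v} :=
    card_marked (L := m + 2) (fun σ => VE2 σ (Fin.last (m + 3)) v) 0 0
  rw [← h1]
  have h2 : ((univ : Finset (Perm (Fin (m + 4)))).filter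
        fun w => VE2 (cyc w) (Fin.last (m + 3)) v ∧ w 0 = 0)
      = ((univ : Finset (Perm (Fin (m + 4)))).filter fun w =>
          (cyc w (Fin.last (m + 3)) = Fin.last (m + 3) + 1 ∧
            ∀ u, u ≠ Fin.last (m + 3) → (cyc w u = u + 1 ↔ dl u = dl v)) ∧ w 0 = 0) := by
    apply filter_congr
    intro w _
    constructor
    · rintro ⟨hV, hw0⟩
      refine ⟨⟨(hV _).mpr (Or.inl rfl), fun u hu => ?_⟩, hw0⟩
      rw [hV u]
      constructor
      · rintro (rfl | rfl)
        · exact absurd rfl hu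
        · rfl
      · intro h
        exact Or.inr ((dl_inj v u hv hu).mp h)
    · rintro ⟨⟨htop, hother⟩, hw0⟩
      refine ⟨fun x => ?_, hw0⟩
      by_cases hx : x = Fin.last (m + 3)
      · subst hx
        exact ⟨fun _ => Or.inl rfl, fun _ => htop⟩
      · rw [hother x hx, dl_inj v x hv hx]
        constructor
        · intro h; exact Or.inr h
        · rintro (rfl | rfl)
          · exact absurd rfl hx
          · rfl
  rw [h2]
  have h3 : ((univ : Finset (Perm (Fin (m + 4)))).filter fun w =>
          (cyc w (Fin.last (m + 3)) = Fin.last (m + 3) + 1 ∧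
            ∀ u, u ≠ Fin.last (m + 3) → (cyc w u = u + 1 ↔ dl u = dl v)) ∧ w 0 = 0).card
      = ((univ : Finset (Perm (Fin (m + 3)))).filter fun w' =>
          (∀ y, cyc w' y = y + 1 ↔ y = dl v) ∧
            w' (Fin.last (m + 2)) = Fin.last (m + 2)).card := by
    have := card_phi (m := m + 1) (fun y => y = dl v)
    convert this using 3
  rw [h3]
  have h4 : ((univ : Finset (Perm (Fin (m + 3)))).filter fun w' =>
          (∀ y, cyc w' y = y + 1 ↔ y = dl v) ∧
            w' (Fin.last (m + 2)) = Fin.last (m + 2)).card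
      = Nat.card {σ : Perm (Fin (m + 3)) // σ.IsCycle ∧ σ.support.card = m + 3 ∧
          VE1 σ (dl v)} :=
    card_marked (L := m + 1) (fun σ => VE1 σ (dl v)) (Fin.last (m + 2)) (Fin.last (m + 2))
  rw [h4]
  have h5 : Nat.card {σ : Perm (Fin (m + 3)) // σ.IsCycle ∧ σ.support.card = m + 3 ∧
          VE1 σ (dl v)}
      = Nat.card {σ : Perm (Fin (m + 3)) // σ.IsCycle ∧ σ.support.card = m + 3 ∧
          VE1 σ (Fin.last (m + 2))} :=
    X_rot (L := m + 1) (dl v) (Fin.last (m + 2))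
  rw [h5]
  exact Xtop_eq m

lemma main (m : ℕ) :
    S (m + 4) = (m + 4) * D (m + 4) + (2 * m + 7) * D (m + 3) + (m + 3) * D (m + 2) := by
  classical
  set T : Fin (m + 4) := Fin.last (m + 3) with hT
  rw [show S (m + 4) = ((univ : Finset (Perm (Fin (m + 4)))).filter fun w =>
    ∀ i j : Fin (m + 4), (j : ℕ) = (i : ℕ) + 1 → ((w j : ℕ) ≠ (w i : ℕ) + 1)).card from rfl]
  set F0 : Finset (Perm (Fin (m + 4))) := univ.filter (fun w => ∀ x, cyc w x ≠ x + 1) with hF0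
  set F1 : Finset (Perm (Fin (m + 4))) := univ.filter (fun w => VE1 (cyc w) T) with hF1
  set F2 : Finset (Perm (Fin (m + 4))) :=
    univ.filter (fun w => w T ≠ T ∧ VE1 (cyc w) (w T)) with hF2
  set F3 : Finset (Perm (Fin (m + 4))) :=
    univ.filter (fun w => w T ≠ T ∧ VE2 (cyc w) T (w T)) with hF3
  have hsplit : ((univ : Finset (Perm (Fin (m + 4)))).filter fun w =>
      ∀ i j : Fin (m + 4), (j : ℕ) = (i : ℕ) + 1 → ((w j : ℕ) ≠ (w i : ℕ) + 1))
      = ((F0 ∪ F1) ∪ F2) ∪ F3 := by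
    ext w
    simp only [hF0, hF1, hF2, hF3, mem_filter, mem_union, mem_univ, true_and]
    rw [NS_char]
    constructor
    · intro h
      rcases class_split w h with h' | h' | h' | h'
      · exact Or.inl (Or.inl (Or.inl h'))
      · exact Or.inl (Or.inl (Or.inr h'))
      · exact Or.inl (Or.inr h')
      · exact Or.inr h'
    · rintro (((h | h) | h) | h)
      · intro x hx
        exact absurd hx (h x)
      · intro x hx
        exact Or.inl ((h x).mp hx)
      · intro x hx
        exact Or.inr ((h.2 x).mp hx)
      · intro x hx
        exact (h.2 x).mp hx
  rw [hsplit]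
  have d01 : Disjoint F0 F1 := by
    rw [Finset.disjoint_left]
    intro w h0 h1
    simp only [hF0, hF1, mem_filter, mem_univ, true_and] at h0 h1
    exact h0 T ((h1 T).mpr rfl)
  have d012 : Disjoint (F0 ∪ F1) F2 := by
    rw [Finset.disjoint_left]
    intro w h01 h2
    simp only [hF0, hF1, hF2, mem_union, mem_filter, mem_univ, true_and] at h01 h2
    have hviol : cyc w (w T) = w T + 1 := (h2.2 (w T)).mpr rfl
    rcases h01 with h | h
    · exact h (w T) hviol
    · exact h2.1 ((h (w T)).mp hviol)
  have d0123 : Disjoint ((F0 ∪ F1) ∪ F2) F3 := by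
    rw [Finset.disjoint_left]
    intro w h012 h3
    simp only [hF0, hF1, hF2, hF3, mem_union, mem_filter, mem_univ, true_and] at h012 h3
    have hvT : cyc w T = T + 1 := (h3.2 T).mpr (Or.inl rfl)
    have hvL : cyc w (w T) = w T + 1 := (h3.2 (w T)).mpr (Or.inr rfl)
    rcases h012 with (h | h) | h
    · exact h T hvT
    · exact h3.1 ((h (w T)).mp hvL)
    · exact h3.1 (((h.2 T).mp hvT).symm)
  rw [card_union_of_disjoint d0123, card_union_of_disjoint d012, card_union_of_disjoint d01]
  have hcF0 : F0.card = (m + 4) * D (m + 4) := by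
    rw [hF0, card_eq_sum_card_fiberwise (f := fun w => w 0) (t := univ) (fun x _ => mem_univ _)]
    have hstep : ∀ a : Fin (m + 4),
        ((univ.filter (fun w : Perm (Fin (m + 4)) => ∀ x, cyc w x ≠ x + 1)).filter
          (fun w => w 0 = a)).card = D (m + 4) := by
      intro a
      rw [filter_filter]
      have := card_marked (L := m + 2) (fun σ => ∀ x, σ x ≠ x + 1) 0 a
      rw [this]
      rfl
    rw [Finset.sum_congr rfl (fun a _ => hstep a), Finset.sum_const, Finset.card_univ]
    simp [mul_comm]
  have hcF1 : F1.card = (m + 4) * D (m + 3) := by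
    rw [hF1, card_eq_sum_card_fiberwise (f := fun w => w 0) (t := univ) (fun x _ => mem_univ _)]
    have hstep : ∀ a : Fin (m + 4),
        ((univ.filter (fun w : Perm (Fin (m + 4)) => VE1 (cyc w) T)).filter
          (fun w => w 0 = a)).card = D (m + 3) := by
      intro a
      rw [filter_filter]
      have h1 := card_marked (L := m + 2) (fun σ => VE1 σ T) 0 a
      rw [h1, hT]
      exact Xtop_eq (m + 1)
    rw [Finset.sum_congr rfl (fun a _ => hstep a), Finset.sum_const, Finset.card_univ]
    simp [mul_comm]
  have hcF2 : F2.card = (m + 3) * D (m + 3) := by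
    have hfib : ∀ w ∈ F2, w T ∈ univ.erase T := by
      intro w hw
      simp only [hF2, mem_filter] at hw
      exact Finset.mem_erase.mpr ⟨hw.2.1, mem_univ _⟩
    rw [hF2, card_eq_sum_card_fiberwise (f := fun w : Perm (Fin (m + 4)) => w T) (t := univ.erase T) hfib]
    have hstep : ∀ v ∈ univ.erase T,
        ((univ.filter (fun w : Perm (Fin (m + 4)) => w T ≠ T ∧ VE1 (cyc w) (w T))).filter
          (fun w => w T = v)).card = D (m + 3) := by
      intro v hv
      have hvT : v ≠ T := (Finset.mem_erase.mp hv).1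
      rw [filter_filter]
      have hcong : (univ.filter fun w : Perm (Fin (m + 4)) =>
            (w T ≠ T ∧ VE1 (cyc w) (w T)) ∧ w T = v)
          = univ.filter fun w => VE1 (cyc w) v ∧ w T = v := by
        apply filter_congr
        intro w _
        constructor
        · rintro ⟨⟨hne, hV⟩, hl⟩
          rw [hl] at hV
          exact ⟨hV, hl⟩
        · rintro ⟨hV, hl⟩
          rw [← hl] at hV
          refine ⟨⟨?_, hV⟩, hl⟩
          rw [hl]; exact hvT
      rw [hcong]
      have h1 := card_marked (L := m + 2) (fun σ => VE1 σ v) T v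
      rw [h1]
      have h2 := X_rot (L := m + 2) v (Fin.last (m + 3))
      rw [show Fin.last (m + 3) = T from rfl] at h2
      rw [h2]
      have := Xtop_eq (m + 1)
      rw [show Fin.last (m + 1 + 2) = T from rfl] at this
      exact this
    rw [Finset.sum_congr rfl hstep, Finset.sum_const, Finset.card_erase_of_mem (mem_univ _),
      Finset.card_univ]
    simp [mul_comm]
  have hcF3 : F3.card = (m + 3) * D (m + 2) := by
    have hfib : ∀ w ∈ F3, w T ∈ univ.erase T := by
      intro w hw
      simp only [hF3, mem_filter] at hw
      exact Finset.mem_erase.mpr ⟨hw.2.1, mem_univ _⟩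
    rw [hF3, card_eq_sum_card_fiberwise (f := fun w : Perm (Fin (m + 4)) => w T) (t := univ.erase T) hfib]
    have hstep : ∀ v ∈ univ.erase T,
        ((univ.filter (fun w : Perm (Fin (m + 4)) => w T ≠ T ∧ VE2 (cyc w) T (w T))).filter
          (fun w => w T = v)).card = D (m + 2) := by
      intro v hv
      have hvT : v ≠ T := (Finset.mem_erase.mp hv).1
      rw [filter_filter]
      have hcong : (univ.filter fun w : Perm (Fin (m + 4)) =>
            (w T ≠ T ∧ VE2 (cyc w) T (w T)) ∧ w T = v)
          = univ.filter fun w => VE2 (cyc w) T v ∧ w T = v := by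
        apply filter_congr
        intro w _
        constructor
        · rintro ⟨⟨hne, hV⟩, hl⟩
          rw [hl] at hV
          exact ⟨hV, hl⟩
        · rintro ⟨hV, hl⟩
          rw [← hl] at hV
          refine ⟨⟨?_, hV⟩, hl⟩
          rw [hl]; exact hvT
      rw [hcong]
      have h1 := card_marked (L := m + 2) (fun σ => VE2 σ T v) T v
      rw [h1]
      have := Y_eq m v (by rw [show Fin.last (m + 3) = T from rfl]; exact hvT)
      rw [show Fin.last (m + 3) = T from rfl] at this
      exact this
    rw [Finset.sum_congr rfl hstep, Finset.sum_const, Finset.card_erase_of_mem (mem_univ _),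
      Finset.card_univ]
    simp [mul_comm]
  rw [hcF0, hcF1, hcF2, hcF3]
  ring

end SuccAux

theorem succession_relation (k : ℕ) (hk : 4 ≤ k) :
    S (k - 2) = (k - 2) * D (k - 2) + (2 * k - 5) * D (k - 3) + (k - 3) * D (k - 4) := by
  rcases Nat.lt_or_ge k 6 with h | h
  · interval_cases k
    · have h2 : S 2 = 1 := by decide
      norm_num [h2, SuccAux.D1, SuccAux.D2, show D 0 = 1 from rfl]
    · have h3 : S 3 = 3 := by decide
      norm_num [h3, SuccAux.D1, SuccAux.D2, SuccAux.D3]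
  · obtain ⟨n, rfl⟩ : ∃ n, k = n + 6 := ⟨k - 6, by omega⟩
    have hmain := SuccAux.main n
    have e1 : n + 6 - 2 = n + 4 := rfl
    have e2 : n + 6 - 3 = n + 3 := rfl
    have e3 : n + 6 - 4 = n + 2 := rfl
    have e4 : 2 * (n + 6) - 5 = 2 * n + 7 := by omega
    rw [e1, e2, e3, e4]
    exact hmain
end

section
/- Let m be a natural number and let β ∈ S_{2m} be a permutation with exactly m fixed points. Then the number of permutations α ∈ S_{2m} that 2m-commute with β equals (m!)². -/
/-- Glue two cross equivalences into a permutation. -/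
def joinPerm {n : ℕ} (p : Fin n → Prop) [DecidablePred p]
    (e₁ : {x // p x} ≃ {x // ¬ p x}) (e₂ : {x // ¬ p x} ≃ {x // p x}) :
    Equiv.Perm (Fin n) :=
  (Equiv.sumCompl p).symm.trans ((Equiv.sumCongr e₁ e₂).trans
    ((Equiv.sumComm _ _).trans (Equiv.sumCompl p)))

lemma joinPerm_pos {n : ℕ} (p : Fin n → Prop) [DecidablePred p]
    (e₁ : {x // p x} ≃ {x // ¬ p x}) (e₂ : {x // ¬ p x} ≃ {x // p x})
    (x : Fin n) (h : p x) : joinPerm p e₁ e₂ x = (e₁ ⟨x, h⟩ : {x // ¬ p x}) := by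
  simp [joinPerm, Equiv.sumCompl_symm_apply_of_pos h]

lemma joinPerm_neg {n : ℕ} (p : Fin n → Prop) [DecidablePred p]
    (e₁ : {x // p x} ≃ {x // ¬ p x}) (e₂ : {x // ¬ p x} ≃ {x // p x})
    (x : Fin n) (h : ¬ p x) : joinPerm p e₁ e₂ x = (e₂ ⟨x, h⟩ : {x // p x}) := by
  simp [joinPerm, Equiv.sumCompl_symm_apply_of_neg h]

/-- Permutations swapping the set defined by `p` with its complement correspond to pairs
of cross equivalences. -/
def splitEquiv {n : ℕ} (p : Fin n → Prop) [DecidablePred p] :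
    {α : Equiv.Perm (Fin n) // ∀ x, p x ↔ ¬ p (α x)} ≃
    (({x // p x} ≃ {x // ¬ p x}) × ({x // ¬ p x} ≃ {x // p x})) where
  toFun α :=
    (⟨fun x => ⟨α.1 x, (α.2 x).mp x.2⟩,
      fun y => ⟨α.1.symm y, (α.2 (α.1.symm y)).mpr (by
        simpa using y.2)⟩,
      fun x => Subtype.ext (α.1.symm_apply_apply x),
      fun y => Subtype.ext (α.1.apply_symm_apply y)⟩,
     ⟨fun x => ⟨α.1 x, by
        by_contra h
        exact x.2 ((α.2 x).mpr h)⟩,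
      fun y => ⟨α.1.symm y, by
        intro h
        have := (α.2 (α.1.symm y)).mp h
        rw [α.1.apply_symm_apply] at this
        exact this y.2⟩,
      fun x => Subtype.ext (α.1.symm_apply_apply x),
      fun y => Subtype.ext (α.1.apply_symm_apply y)⟩)
  invFun ee := ⟨joinPerm p ee.1 ee.2, by
    intro x
    by_cases h : p x
    · rw [joinPerm_pos p ee.1 ee.2 x h]
      simp [h, (ee.1 ⟨x, h⟩).2]
    · rw [joinPerm_neg p ee.1 ee.2 x h]
      simp [h, (ee.2 ⟨x, h⟩).2]⟩
  left_inv α := by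
    apply Subtype.ext
    apply Equiv.ext
    intro x
    by_cases h : p x
    · rw [joinPerm_pos p _ _ x h]; rfl
    · rw [joinPerm_neg p _ _ x h]; rfl
  right_inv ee := by
    apply Prod.ext
    · apply Equiv.ext
      intro x
      apply Subtype.ext
      simpa using joinPerm_pos p ee.1 ee.2 x.1 x.2
    · apply Equiv.ext
      intro x
      apply Subtype.ext
      simpa using joinPerm_neg p ee.1 ee.2 x.1 x.2

theorem c_2m_of_half_fixed (m : ℕ) (β : Equiv.Perm (Fin (2 * m)))
    (hβ : (Finset.univ.filter fun x : Fin (2 * m) => β x = x).card = m) :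
    kcomm (2 * m) β = Nat.factorial m ^ 2 := by
  classical
  let n := 2 * m
  let p : Fin n → Prop := fun x => β x = x
  have hpF : (Finset.univ.filter p).card = m := hβ
  have hMcard : (Finset.univ.filter fun x => ¬ p x).card = m := by
    have h2 := Finset.card_filter_add_card_filter_not
      (s := (Finset.univ : Finset (Fin n))) (p := p)
    rw [hpF, Finset.card_univ, Fintype.card_fin] at h2
    omega
  -- The key characterization
  have key : ∀ α : Equiv.Perm (Fin n),
      hamming (α * β) (β * α) = n ↔ ∀ x, p x ↔ ¬ p (α x) := by
    intro α
    have hC : hamming (α * β) (β * α) = n ↔ ∀ x, α (β x) ≠ β (α x) := by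
      unfold hamming
      constructor
      · intro h x
        have huniv : (Finset.univ.filter fun a : Fin n =>
            (α * β) a ≠ (β * α) a) = Finset.univ := by
          apply Finset.eq_univ_of_card
          rw [h, Fintype.card_fin]
        have := Finset.eq_univ_iff_forall.mp huniv x
        simp only [Finset.mem_filter, Finset.mem_univ, true_and] at this
        simpa using this
      · intro h
        have huniv : (Finset.univ.filter fun a : Fin n =>
            (α * β) a ≠ (β * α) a) = Finset.univ := by
          rw [Finset.eq_univ_iff_forall]
          intro x
          exact Finset.mem_filter.mpr ⟨Finset.mem_univ _, h x⟩
        rw [huniv, Finset.card_univ, Fintype.card_fin]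
    rw [hC]
    constructor
    · intro h
      -- from the condition, α maps fixed points to non-fixed points
      have hsub : (Finset.univ.filter p).image α ⊆
          Finset.univ.filter fun x => ¬ p x := by
        intro y hy
        simp only [Finset.mem_image, Finset.mem_filter, Finset.mem_univ, true_and] at hy ⊢
        obtain ⟨x, hx, rfl⟩ := hy
        have := h x
        rw [show β x = x from hx] at this
        exact fun hfix => this hfix.symm
      have himg : (Finset.univ.filter p).image α =
          Finset.univ.filter fun x => ¬ p x := by
        apply Finset.eq_of_subset_of_card_le hsub
        rw [Finset.card_image_of_injective _ α.injective, hpF, hMcard]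
      intro x
      constructor
      · intro hx
        have : α x ∈ (Finset.univ.filter p).image α := by
          simp only [Finset.mem_image, Finset.mem_filter, Finset.mem_univ, true_and]
          exact ⟨x, hx, rfl⟩
        rw [himg] at this
        simpa using this
      · intro hx
        have : α x ∈ (Finset.univ.filter p).image α := by
          rw [himg]; simpa using hx
        simp only [Finset.mem_image, Finset.mem_filter, Finset.mem_univ, true_and] at this
        obtain ⟨y, hy, hyx⟩ := this
        rwa [α.injective hyx] at hy
    · intro h x
      by_cases hx : p x
      · have hx' : β x = x := hx
        rw [hx']
        intro hcon
        exact (h x).mp hx hcon.symm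
      · have hβx : ¬ p (β x) := by
          simp only [p] at hx ⊢
          intro hcon
          exact hx (β.injective hcon)
        have h1 : p (α (β x)) := by
          by_contra hc
          exact hβx ((h (β x)).mpr hc)
        have h2 : p (α x) := by
          by_contra hc
          exact hx ((h x).mpr hc)
        rw [show β (α x) = α x from h2]
        intro hcon
        exact hx (α.injective hcon)
  -- rewrite the count
  show (Finset.univ.filter fun α : Equiv.Perm (Fin n) =>
      hamming (α * β) (β * α) = n).card = Nat.factorial m ^ 2
  have hfilter : (Finset.univ.filter fun α : Equiv.Perm (Fin n) =>
      hamming (α * β) (β * α) = n) =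
      Finset.univ.filter fun α : Equiv.Perm (Fin n) => ∀ x, p x ↔ ¬ p (α x) := by
    apply Finset.filter_congr
    intro α _
    exact key α
  rw [hfilter, ← Fintype.card_subtype]
  rw [Fintype.card_congr (splitEquiv p)]
  have c1 : Fintype.card {x : Fin n // p x} = m := by
    rw [Fintype.card_subtype]; exact hpF
  have c2 : Fintype.card {x : Fin n // ¬ p x} = m := by
    rw [Fintype.card_subtype]; exact hMcard
  have e : {x : Fin n // p x} ≃ {x : Fin n // ¬ p x} :=
    Fintype.equivOfCardEq (by rw [c1, c2])
  rw [Fintype.card_prod, Fintype.card_equiv e, Fintype.card_equiv e.symm, c1, c2, sq]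
end

section
/- Let m ≥ 1 be a natural number and let β ∈ S_{2m} be a permutation with exactly m fixed points. Then the number of permutations α ∈ S_{2m} that (2m−1)-commute with β equals m²·(m!)². -/
open Finset Equiv

lemma card_filter_comp {n : ℕ} (α : Equiv.Perm (Fin n)) (p : Fin n → Prop) [DecidablePred p] :
    (Finset.univ.filter fun x => p (α x)).card = (Finset.univ.filter p).card := by
  apply Finset.card_bij (fun x _ => α x)
  · intro a ha
    simp only [mem_filter, mem_univ, true_and] at ha ⊢
    exact ha
  · intro a _ b _ h
    exact α.injective h
  · intro b hb
    simp only [mem_filter, mem_univ, true_and] at hb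
    exact ⟨α.symm b, by simp [hb], by simp⟩

-- a = d lemma
lemma card_ad {m : ℕ} (β : Equiv.Perm (Fin (2*m)))
    (hβ : (Finset.univ.filter fun x : Fin (2*m) => β x = x).card = m)
    (α : Equiv.Perm (Fin (2*m))) :
    (Finset.univ.filter fun x => ¬ β x = x ∧ ¬ β (α x) = α x).card
      = (Finset.univ.filter fun x => β x = x ∧ β (α x) = α x).card := by
  classical
  have htot : (Finset.univ : Finset (Fin (2*m))).card = 2*m := by simp
  have hqa : (Finset.univ.filter fun x : Fin (2*m) => β (α x) = α x).card = m := by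
    rw [card_filter_comp α (fun y => β y = y), hβ]
  -- split filter p by q
  have h1 := Finset.card_filter_add_card_filter_not
    (s := Finset.univ.filter fun x : Fin (2*m) => β x = x)
    (p := fun x => β (α x) = α x)
  rw [Finset.filter_filter, Finset.filter_filter, hβ] at h1
  -- split filter ¬q by p
  have h2 := Finset.card_filter_add_card_filter_not
    (s := Finset.univ.filter fun x : Fin (2*m) => ¬ β (α x) = α x)
    (p := fun x => β x = x)
  rw [Finset.filter_filter, Finset.filter_filter] at h2
  have hnq : (Finset.univ.filter fun x : Fin (2*m) => ¬ β (α x) = α x).card = m := by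
    have := Finset.card_filter_add_card_filter_not
      (s := (Finset.univ : Finset (Fin (2*m)))) (p := fun x => β (α x) = α x)
    omega
  rw [hnq] at h2
  have he1 : (Finset.univ.filter fun x : Fin (2*m) => ¬ β (α x) = α x ∧ ¬ β x = x)
      = (Finset.univ.filter fun x : Fin (2*m) => ¬ β x = x ∧ ¬ β (α x) = α x) := by
    apply Finset.filter_congr; intro x _; constructor <;> exact fun h => ⟨h.2, h.1⟩
  have he2 : (Finset.univ.filter fun x : Fin (2*m) => ¬ β (α x) = α x ∧ β x = x)
      = (Finset.univ.filter fun x : Fin (2*m) => β x = x ∧ ¬ β (α x) = α x) := by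
    apply Finset.filter_congr; intro x _; constructor <;> exact fun h => ⟨h.2, h.1⟩
  rw [he1, he2] at h2
  omega

lemma hcomp {m : ℕ} (β : Equiv.Perm (Fin (2*m)))
    (hβ : (Finset.univ.filter fun x : Fin (2*m) => β x = x).card = m)
    (π : Equiv.Perm (Fin (2*m)))
    (hπ : ∀ x, β x = x → ¬ β (π x) = π x) :
    ∀ x, ¬ β x = x → β (π x) = π x := by
  classical
  have htot : (Finset.univ : Finset (Fin (2*m))).card = 2*m := by simp
  set S := (Finset.univ.filter fun x : Fin (2*m) => β x = x).image π with hS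
  have hsub : S ⊆ Finset.univ.filter fun x : Fin (2*m) => ¬ β x = x := by
    intro y hy
    simp only [hS, Finset.mem_image, mem_filter, mem_univ, true_and] at hy ⊢
    obtain ⟨x, hx, rfl⟩ := hy
    exact hπ x hx
  have hcardS : S.card = m := by
    rw [hS, Finset.card_image_of_injective _ π.injective, hβ]
  have hcardN : (Finset.univ.filter fun x : Fin (2*m) => ¬ β x = x).card = m := by
    have := Finset.card_filter_add_card_filter_not
      (s := (Finset.univ : Finset (Fin (2*m)))) (p := fun x => β x = x)
    omega
  have heq : S = Finset.univ.filter fun x : Fin (2*m) => ¬ β x = x :=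
    Finset.eq_of_subset_of_card_le hsub (by omega)
  intro x hx
  by_contra hnx
  have : π x ∈ S := by
    rw [heq]; simp only [mem_filter, mem_univ, true_and]; exact hnx
  simp only [hS, Finset.mem_image, mem_filter, mem_univ, true_and] at this
  obtain ⟨y, hy, hyx⟩ := this
  exact hx (π.injective hyx ▸ hy)




lemma ham_iff {m : ℕ} (hm : 1 ≤ m) (β : Equiv.Perm (Fin (2*m)))
    (hβ : (Finset.univ.filter fun x : Fin (2*m) => β x = x).card = m)
    (α : Equiv.Perm (Fin (2*m))) :
    hamming (α * β) (β * α) = 2*m - 1 ↔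
      (Finset.univ.filter fun x => β x = x ∧ β (α x) = α x).card = 1 := by
  classical
  have hβinv : ∀ y : Fin (2*m), (β (β y) = β y ↔ β y = y) := by
    intro y; constructor
    · exact fun h => β.injective h
    · intro h; rw [h]; exact h
  set C := Finset.univ.filter fun x : Fin (2*m) => α (β x) = β (α x) with hC
  have hsum : C.card + hamming (α * β) (β * α) = 2*m := by
    have := Finset.card_filter_add_card_filter_not
      (s := (Finset.univ : Finset (Fin (2*m)))) (p := fun x => α (β x) = β (α x))
    simp only [hamming, Equiv.Perm.mul_apply, ne_eq]
    simp only [Finset.card_univ, Fintype.card_fin] at this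
    convert this using 3
    exact Finset.filter_congr (fun _ _ => Iff.rfl)
  -- C is contained in the union of the two diagonal filters
  have hCsub : ∀ x ∈ C, (β x = x ∧ β (α x) = α x) ∨ (¬ β x = x ∧ ¬ β (α x) = α x) := by
    intro x hx
    simp only [hC, mem_filter, mem_univ, true_and] at hx
    by_cases hpx : β x = x
    · left
      refine ⟨hpx, ?_⟩
      rw [hpx] at hx
      exact hx.symm
    · right
      refine ⟨hpx, fun hq => ?_⟩
      rw [hq] at hx
      exact hpx (α.injective hx)
  have hsubC : (Finset.univ.filter fun x => β x = x ∧ β (α x) = α x) ⊆ C := by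
    intro x hx
    simp only [mem_filter, mem_univ, true_and, hC] at hx ⊢
    rw [hx.1, hx.2]
  constructor
  · -- hamming = 2m-1 → a = 1
    intro hh
    have hCcard : C.card = 1 := by omega
    have ha1 : (Finset.univ.filter fun x => β x = x ∧ β (α x) = α x).card ≤ 1 := by
      have := Finset.card_le_card hsubC
      omega
    rcases Nat.lt_or_ge (Finset.univ.filter fun x => β x = x ∧ β (α x) = α x).card 1 with h | h
    · exfalso
      have ha0 : (Finset.univ.filter fun x => β x = x ∧ β (α x) = α x).card = 0 := by omega
      have hd0 : (Finset.univ.filter fun x => ¬ β x = x ∧ ¬ β (α x) = α x).card = 0 := by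
        rw [card_ad β hβ α]; exact ha0
      have : C.card = 0 := by
        rw [Finset.card_eq_zero] at ha0 hd0 ⊢
        rw [Finset.eq_empty_iff_forall_notMem]
        intro x hx
        rcases hCsub x hx with h' | h'
        · exact absurd (Finset.mem_filter.mpr ⟨Finset.mem_univ x, h'⟩) (by rw [ha0]; simp)
        · exact absurd (Finset.mem_filter.mpr ⟨Finset.mem_univ x, h'⟩) (by rw [hd0]; simp)
      omega
    · omega
  · -- a = 1 → hamming = 2m-1
    intro ha
    have hd : (Finset.univ.filter fun x => ¬ β x = x ∧ ¬ β (α x) = α x).card = 1 := by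
      rw [card_ad β hβ α]; exact ha
    obtain ⟨x₁, hx₁⟩ := Finset.card_eq_one.mp hd
    have hx₁mem : ¬ β x₁ = x₁ ∧ ¬ β (α x₁) = α x₁ := by
      have : x₁ ∈ Finset.univ.filter fun x => ¬ β x = x ∧ ¬ β (α x) = α x := by
        rw [hx₁]; simp
      simpa using this
    -- x₁ is not in C
    have hx₁C : x₁ ∉ C := by
      simp only [hC, mem_filter, mem_univ, true_and]
      intro hcomm
      -- β x₁ ≠ x₁, so β x₁ is a non-fixed point different from x₁... show β x₁ ∉ {x₁}
      have hb1 : ¬ β (β x₁) = β x₁ := fun h => hx₁mem.1 (β.injective h)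
      have hne : β x₁ ≠ x₁ := hx₁mem.1
      have : β x₁ ∉ Finset.univ.filter fun x => ¬ β x = x ∧ ¬ β (α x) = α x := by
        rw [hx₁]; simp [hne]
      simp only [mem_filter, mem_univ, true_and, not_and, not_not] at this
      have hpab : β (α (β x₁)) = α (β x₁) := this hb1
      -- but α (β x₁) = β (α x₁) and ¬ β (β (α x₁)) = β (α x₁)
      rw [hcomm] at hpab
      have : ¬ β (β (α x₁)) = β (α x₁) := fun h => hx₁mem.2 (β.injective h)
      exact this hpab
    -- C equals the fixed-diagonal filter
    have hCeq : C = Finset.univ.filter fun x => β x = x ∧ β (α x) = α x := by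
      apply Finset.Subset.antisymm _ hsubC
      intro x hx
      rcases hCsub x hx with h' | h'
      · simp only [mem_filter, mem_univ, true_and]; exact h'
      · exfalso
        have : x ∈ Finset.univ.filter fun x => ¬ β x = x ∧ ¬ β (α x) = α x :=
          Finset.mem_filter.mpr ⟨Finset.mem_univ x, h'⟩
        rw [hx₁] at this
        simp at this
        subst this
        exact hx₁C hx
    have : C.card = 1 := by rw [hCeq]; exact ha
    omega

def permSplit {n : ℕ} (p : Fin n → Prop) [DecidablePred p] :
    {π : Equiv.Perm (Fin n) // ∀ x, p x ↔ ¬ p (π x)} ≃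
      (({x // p x} ≃ {x // ¬ p x}) × ({x // ¬ p x} ≃ {x // p x})) where
  toFun π :=
    (Equiv.subtypeEquiv π.1 π.2,
     Equiv.subtypeEquiv π.1 (fun x => by
       constructor
       · intro hnx
         by_contra hn
         exact hnx ((π.2 x).mpr hn)
       · intro hq hx
         exact (π.2 x).mp hx hq))
  invFun στ :=
    ⟨(Equiv.sumCompl p).symm.trans ((στ.1.sumCongr στ.2).trans
        ((Equiv.sumComm _ _).trans (Equiv.sumCompl p))), by
      intro x
      by_cases hx : p x
      · simp only [Equiv.trans_apply, Equiv.sumCompl_symm_apply_of_pos hx,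
          Equiv.sumCongr_apply, Sum.map_inl, Equiv.sumComm_apply, Sum.swap_inl,
          Equiv.sumCompl_apply_inr]
        exact iff_of_true hx (στ.1 ⟨x, hx⟩).2
      · simp only [Equiv.trans_apply, Equiv.sumCompl_symm_apply_of_neg hx,
          Equiv.sumCongr_apply, Sum.map_inr, Equiv.sumComm_apply, Sum.swap_inr,
          Equiv.sumCompl_apply_inl]
        exact iff_of_false hx (not_not_intro (στ.2 ⟨x, hx⟩).2)⟩
  left_inv π := by
    apply Subtype.ext
    apply Equiv.ext
    intro x
    by_cases hx : p x
    · simp [Equiv.sumCompl_symm_apply_of_pos hx]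
    · simp [Equiv.sumCompl_symm_apply_of_neg hx]
  right_inv στ := by
    apply Prod.ext
    · apply Equiv.ext
      intro x
      apply Subtype.ext
      simp [Equiv.sumCompl_symm_apply_of_pos x.2]
    · apply Equiv.ext
      intro x
      apply Subtype.ext
      simp [Equiv.sumCompl_symm_apply_of_neg x.2]



lemma card_P {m : ℕ} (β : Equiv.Perm (Fin (2*m)))
    (hβ : (Finset.univ.filter fun x : Fin (2*m) => β x = x).card = m) :
    (Finset.univ.filter fun π : Equiv.Perm (Fin (2*m)) =>
      ∀ x, β x = x → ¬ β (π x) = π x).card = m.factorial * m.factorial := by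
  classical
  have hfe : (Finset.univ.filter fun π : Equiv.Perm (Fin (2*m)) =>
      ∀ x, β x = x → ¬ β (π x) = π x)
      = (Finset.univ.filter fun π : Equiv.Perm (Fin (2*m)) =>
      ∀ x, β x = x ↔ ¬ β (π x) = π x) := by
    apply Finset.filter_congr
    intro π _
    constructor
    · intro h x
      refine ⟨h x, fun hn => ?_⟩
      by_contra hx
      exact hn (hcomp β hβ π h x hx)
    · intro h x hx
      exact (h x).mp hx
  rw [hfe]
  have hcard : (Finset.univ.filter fun π : Equiv.Perm (Fin (2*m)) =>
      ∀ x, β x = x ↔ ¬ β (π x) = π x).card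
      = Fintype.card {π : Equiv.Perm (Fin (2*m)) // ∀ x, β x = x ↔ ¬ β (π x) = π x} :=
    (Fintype.card_subtype _).symm
  rw [hcard, Fintype.card_congr (permSplit (fun x => β x = x)), Fintype.card_prod]
  have hA : Fintype.card {x : Fin (2*m) // β x = x} = m := by
    rw [Fintype.card_subtype]
    exact hβ
  have hB : Fintype.card {x : Fin (2*m) // ¬ β x = x} = m := by
    rw [Fintype.card_subtype_compl, hA, Fintype.card_fin]
    omega
  have e : {x : Fin (2*m) // β x = x} ≃ {x : Fin (2*m) // ¬ β x = x} :=
    Fintype.equivOfCardEq (by rw [hA, hB])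
  rw [Fintype.card_equiv e, Fintype.card_equiv e.symm, hA, hB]







lemma filter_eq_pair {m : ℕ} (β : Equiv.Perm (Fin (2*m)))
    (hβ : (Finset.univ.filter fun x : Fin (2*m) => β x = x).card = m)
    (x₀ x₁ : Fin (2*m)) (hx₀ : β x₀ = x₀) (hx₁ : ¬ β x₁ = x₁)
    (π : Equiv.Perm (Fin (2*m))) (hπ : ∀ x, β x = x → ¬ β (π x) = π x) :
    (Finset.univ.filter fun x => β x = x ∧
        β ((π * Equiv.swap x₀ x₁) x) = (π * Equiv.swap x₀ x₁) x) = {x₀} ∧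
    (Finset.univ.filter fun x => ¬ β x = x ∧
        ¬ β ((π * Equiv.swap x₀ x₁) x) = (π * Equiv.swap x₀ x₁) x) = {x₁} := by
  classical
  have hne : x₀ ≠ x₁ := fun h => hx₁ (h ▸ hx₀)
  constructor
  · ext x
    simp only [mem_filter, mem_univ, true_and, mem_singleton]
    simp only [Equiv.Perm.mul_apply]
    constructor
    · rintro ⟨hpx, hpax⟩
      by_contra hxx
      have hx1 : x ≠ x₁ := fun h => hx₁ (h ▸ hpx)
      rw [Equiv.swap_apply_of_ne_of_ne hxx hx1] at hpax
      exact hπ x hpx hpax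
    · rintro rfl
      rw [Equiv.swap_apply_left]
      exact ⟨hx₀, hcomp β hβ π hπ x₁ hx₁⟩
  · ext x
    simp only [mem_filter, mem_univ, true_and, mem_singleton]
    simp only [Equiv.Perm.mul_apply]
    constructor
    · rintro ⟨hnx, hnax⟩
      by_contra hxx
      have hx0 : x ≠ x₀ := fun h => hnx (h ▸ hx₀)
      rw [Equiv.swap_apply_of_ne_of_ne hx0 hxx] at hnax
      exact hnax (hcomp β hβ π hπ x hnx)
    · rintro rfl
      rw [Equiv.swap_apply_right]
      exact ⟨hx₁, hπ x₀ hx₀⟩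

lemma card_T {m : ℕ} (β : Equiv.Perm (Fin (2*m)))
    (hβ : (Finset.univ.filter fun x : Fin (2*m) => β x = x).card = m) :
    (Finset.univ.filter fun α : Equiv.Perm (Fin (2*m)) =>
      (Finset.univ.filter fun x => β x = x ∧ β (α x) = α x).card = 1).card
      = m^2 * m.factorial^2 := by
  classical
  have hFncard : (Finset.univ.filter fun x : Fin (2*m) => ¬ β x = x).card = m := by
    have := Finset.card_filter_add_card_filter_not
      (s := (Finset.univ : Finset (Fin (2*m)))) (p := fun x => β x = x)
    have htot : (Finset.univ : Finset (Fin (2*m))).card = 2*m := by simp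
    omega
  set Fp := Finset.univ.filter fun x : Fin (2*m) => β x = x with hFp
  set Fn := Finset.univ.filter fun x : Fin (2*m) => ¬ β x = x with hFn
  set P := Finset.univ.filter fun π : Equiv.Perm (Fin (2*m)) =>
      ∀ x, β x = x → ¬ β (π x) = π x with hP
  have key : (Fp ×ˢ (Fn ×ˢ P)).card
      = (Finset.univ.filter fun α : Equiv.Perm (Fin (2*m)) =>
      (Finset.univ.filter fun x => β x = x ∧ β (α x) = α x).card = 1).card := by
    apply Finset.card_bij (fun t _ => t.2.2 * Equiv.swap t.1 t.2.1)
    · rintro ⟨x₀, x₁, π⟩ ht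
      simp only [Finset.mem_product, hFp, hFn, hP, mem_filter, mem_univ, true_and] at ht
      obtain ⟨hx₀, hx₁, hπ⟩ := ht
      simp only [mem_filter, mem_univ, true_and]
      rw [(filter_eq_pair β hβ x₀ x₁ hx₀ hx₁ π hπ).1]
      simp
    · rintro ⟨x₀, x₁, π⟩ ht ⟨y₀, y₁, ρ⟩ ht' heq
      simp only [Finset.mem_product, hFp, hFn, hP, mem_filter, mem_univ, true_and] at ht ht'
      obtain ⟨hx₀, hx₁, hπ⟩ := ht
      obtain ⟨hy₀, hy₁, hρ⟩ := ht'
      simp only at heq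
      have h1 := (filter_eq_pair β hβ x₀ x₁ hx₀ hx₁ π hπ).1
      have h2 := (filter_eq_pair β hβ y₀ y₁ hy₀ hy₁ ρ hρ).1
      rw [heq, h2] at h1
      have hx0y0 : y₀ = x₀ := by
        have := Finset.singleton_injective h1
        exact this
      have h3 := (filter_eq_pair β hβ x₀ x₁ hx₀ hx₁ π hπ).2
      have h4 := (filter_eq_pair β hβ y₀ y₁ hy₀ hy₁ ρ hρ).2
      rw [heq, h4] at h3
      have hx1y1 : y₁ = x₁ := Finset.singleton_injective h3
      subst hx0y0
      subst hx1y1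
      have : π = ρ := mul_right_cancel heq
      rw [this]
    · intro α hα
      simp only [mem_filter, mem_univ, true_and] at hα
      obtain ⟨x₀, hx₀⟩ := Finset.card_eq_one.mp hα
      have hd : (Finset.univ.filter fun x => ¬ β x = x ∧ ¬ β (α x) = α x).card = 1 := by
        rw [card_ad β hβ α, hα]
      obtain ⟨x₁, hx₁⟩ := Finset.card_eq_one.mp hd
      have hx₀mem : β x₀ = x₀ ∧ β (α x₀) = α x₀ := by
        have : x₀ ∈ Finset.univ.filter fun x => β x = x ∧ β (α x) = α x := by
          rw [hx₀]; simp
        simpa using this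
      have hx₁mem : ¬ β x₁ = x₁ ∧ ¬ β (α x₁) = α x₁ := by
        have : x₁ ∈ Finset.univ.filter fun x => ¬ β x = x ∧ ¬ β (α x) = α x := by
          rw [hx₁]; simp
        simpa using this
      have hne : x₀ ≠ x₁ := fun h => hx₁mem.1 (h ▸ hx₀mem.1)
      set π := α * Equiv.swap x₀ x₁ with hπdef
      have hπP : ∀ x, β x = x → ¬ β (π x) = π x := by
        intro x hpx
        rw [hπdef]
        simp only [Equiv.Perm.mul_apply]
        by_cases hxx : x = x₀
        · subst hxx
          rw [Equiv.swap_apply_left]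
          exact hx₁mem.2
        · have hx1 : x ≠ x₁ := fun h => hx₁mem.1 (h ▸ hpx)
          rw [Equiv.swap_apply_of_ne_of_ne hxx hx1]
          intro hpax
          have : x ∈ Finset.univ.filter fun y => β y = y ∧ β (α y) = α y := by
            simp [hpx, hpax]
          rw [hx₀] at this
          simp at this
          exact hxx this
      refine ⟨⟨x₀, x₁, π⟩, ?_, ?_⟩
      · simp only [Finset.mem_product, hFp, hFn, hP, mem_filter, mem_univ, true_and]
        exact ⟨hx₀mem.1, hx₁mem.1, hπP⟩
      · simp only [hπdef]
        rw [mul_assoc, Equiv.swap_mul_self, mul_one]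
  rw [← key]
  rw [Finset.card_product, Finset.card_product, hFncard, card_P β hβ]
  have : Fp.card = m := hβ
  rw [this]
  ring

theorem c_2m_sub_one_of_half_fixed (m : ℕ) (hm : 1 ≤ m)
    (β : Equiv.Perm (Fin (2 * m)))
    (hβ : (Finset.univ.filter fun x : Fin (2 * m) => β x = x).card = m) :
    kcomm (2 * m - 1) β = m ^ 2 * Nat.factorial m ^ 2 := by
  classical
  unfold kcomm
  have heq : (Finset.univ.filter fun α : Equiv.Perm (Fin (2*m)) =>
        hamming (α * β) (β * α) = 2*m - 1)
      = (Finset.univ.filter fun α : Equiv.Perm (Fin (2*m)) =>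
        (Finset.univ.filter fun x => β x = x ∧ β (α x) = α x).card = 1) := by
    apply Finset.filter_congr
    intro α _
    exact ham_iff hm β hβ α
  rw [heq, card_T β hβ]
end

section
/- Let m ≥ 1 be a natural number and let β ∈ S_{2m−1} be a permutation with exactly m−1 fixed points. Then the number of permutations α ∈ S_{2m−1} that (2m−1)-commute with β equals (m!)². -/
open Finset Equiv

lemma card_extensions {n : ℕ} (F : Finset (Fin n)) (f : ↥F → Fin n)
    (hf : Function.Injective f) :
    (Finset.univ.filter fun α : Equiv.Perm (Fin n) => ∀ x : ↥F, α ↑x = f x).card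
      = Nat.factorial (n - F.card) := by
  classical
  rw [← Fintype.card_subtype]
  have he0 : ∀ x : (↑F : Set (Fin n)), (↑(Equiv.ofInjective f hf x) : Fin n) = f ⟨x.1, x.2⟩ :=
    fun x => by simp
  have key := Equiv.Set.compl (s := (↑F : Set (Fin n))) (t := Set.range f) (Equiv.ofInjective f hf)
  have eqv : { e : Fin n ≃ Fin n // ∀ x : ↥F, e x = f x } ≃
      { e : Fin n ≃ Fin n // ∀ x : (↑F : Set (Fin n)), e x = Equiv.ofInjective f hf x } := by
    apply Equiv.subtypeEquivRight
    intro e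
    constructor
    · intro h x; rw [he0 x]; exact h ⟨x.1, x.2⟩
    · intro h x; have := h ⟨x.1, x.2⟩; rw [he0] at this; exact this
  rw [Fintype.card_congr (eqv.trans key)]
  have hc1 : Fintype.card ↥((↑F : Set (Fin n))ᶜ) = n - F.card := by
    rw [Fintype.card_compl_set]
    simp
  have hc2 : Fintype.card ↥((Set.range f)ᶜ) = n - F.card := by
    rw [Fintype.card_compl_set, Set.card_range_of_injective hf]
    simp
  rw [Fintype.card_equiv (Fintype.equivOfCardEq (by rw [hc1, hc2])), hc1]

lemma count_mapsTo {n : ℕ} (F : Finset (Fin n)) :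
    (Finset.univ.filter fun α : Equiv.Perm (Fin n) => ∀ x ∈ F, α x ∈ Fᶜ).card
      = Nat.descFactorial (n - F.card) F.card * Nat.factorial (n - F.card) := by
  classical
  set S := Finset.univ.filter fun α : Equiv.Perm (Fin n) => ∀ x ∈ F, α x ∈ Fᶜ with hS
  set B : Finset (↥F → Fin n) :=
    Finset.univ.filter (fun f => Function.Injective f ∧ ∀ x, f x ∈ Fᶜ) with hB
  have hmap : ∀ α ∈ S, (fun x : ↥F => α ↑x) ∈ B := by
    intro α hα
    simp only [hS, mem_filter, mem_univ, true_and] at hα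
    simp only [hB, mem_filter, mem_univ, true_and]
    exact ⟨fun a b hab => Subtype.ext (α.injective hab), fun x => hα x x.2⟩
  rw [Finset.card_eq_sum_card_fiberwise hmap]
  have hfib : ∀ f ∈ B, (S.filter fun α => (fun x : ↥F => α ↑x) = f).card
      = Nat.factorial (n - F.card) := by
    intro f hf
    simp only [hB, mem_filter, mem_univ, true_and] at hf
    rw [show (S.filter fun α => (fun x : ↥F => α ↑x) = f)
        = Finset.univ.filter fun α : Equiv.Perm (Fin n) => ∀ x : ↥F, α ↑x = f x by
      ext α
      simp only [hS, mem_filter, mem_univ, true_and, funext_iff]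
      constructor
      · rintro ⟨-, h⟩ x; exact h x
      · intro h
        exact ⟨fun x hx => by rw [h ⟨x, hx⟩]; exact hf.2 ⟨x, hx⟩, fun x => h x⟩]
    exact card_extensions F f hf.1
  rw [Finset.sum_congr rfl hfib, Finset.sum_const, smul_eq_mul]
  congr 1
  rw [← Fintype.card_subtype]
  have e : {f : ↥F → Fin n // Function.Injective f ∧ ∀ x, f x ∈ Fᶜ}
      ≃ (↥F ↪ ↥(Fᶜ : Finset (Fin n))) :=
    { toFun := fun g => ⟨fun x => ⟨g.1 x, g.2.2 x⟩,
        fun a b hab => g.2.1 (by simpa using congrArg Subtype.val hab)⟩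
      invFun := fun g => ⟨fun x => ↑(g x),
        fun a b hab => g.injective (Subtype.ext hab), fun x => (g x).2⟩
      left_inv := fun g => rfl
      right_inv := fun g => by ext x : 2; rfl }
  rw [Fintype.card_congr e, Fintype.card_embedding_eq]
  simp [Finset.card_compl]

theorem c_2m_sub_one_odd_case (m : ℕ) (hm : 1 ≤ m)
    (β : Equiv.Perm (Fin (2 * m - 1)))
    (hβ : (Finset.univ.filter fun x : Fin (2 * m - 1) => β x = x).card = m - 1) :
    kcomm (2 * m - 1) β = Nat.factorial m ^ 2 := by
  classical
  set F : Finset (Fin (2 * m - 1)) := Finset.univ.filter fun x => β x = x with hF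
  have hmemF : ∀ x, x ∈ F ↔ β x = x := by intro x; simp [hF]
  have hcard : Fintype.card (Fin (2 * m - 1)) = 2 * m - 1 := Fintype.card_fin _
  have hFc : (Fᶜ : Finset (Fin (2 * m - 1))).card = m := by
    rw [Finset.card_compl, hcard, hβ]; omega
  -- β maps non-fixed points to non-fixed points
  have hβM : ∀ x, x ∉ F → β x ∉ F := by
    intro x hx hbx
    rw [hmemF] at hbx
    exact hx ((hmemF x).2 (β.injective hbx))
  -- the key equivalence
  have hiff : ∀ α : Equiv.Perm (Fin (2 * m - 1)),
      (hamming (α * β) (β * α) = 2 * m - 1) ↔ ∀ x ∈ F, α x ∈ Fᶜ := by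
    intro α
    have huniv : (Finset.univ : Finset (Fin (2 * m - 1))).card = 2 * m - 1 := by
      rw [Finset.card_univ, hcard]
    have hham : hamming (α * β) (β * α) = 2 * m - 1 ↔ ∀ a, α (β a) ≠ β (α a) := by
      unfold hamming
      constructor
      · intro hc a
        have := Finset.card_filter_eq_iff.1 (hc.trans huniv.symm) a (Finset.mem_univ a)
        simpa using this
      · intro h
        rw [Finset.filter_eq_self.2 fun a _ => by simpa using h a]
        exact huniv
    rw [hham]
    constructor
    · intro h x hx
      rw [hmemF] at hx
      rw [Finset.mem_compl, hmemF]
      intro hax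
      exact h x (by rw [hx, hax])
    · intro h a hcontra
      -- h : α maps F into Fᶜ
      have himg : F.image α ⊆ Fᶜ := by
        intro y hy
        obtain ⟨x, hx, rfl⟩ := Finset.mem_image.1 hy
        exact h x hx
      have hT1 : (Fᶜ \ F.image α).card = 1 := by
        rw [Finset.card_sdiff_of_subset himg, Finset.card_image_of_injective _ α.injective, hFc, hβ]
        omega
      have hT : ∀ x, x ∉ F → α x ∉ F → α x ∈ Fᶜ \ F.image α := by
        intro x hx hax
        rw [Finset.mem_sdiff, Finset.mem_compl]
        refine ⟨hax, fun hmem => ?_⟩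
        obtain ⟨y, hy, hyx⟩ := Finset.mem_image.1 hmem
        exact hx (α.injective hyx ▸ hy)
      by_cases hba : β a = a
      · -- a fixed: contradiction with h
        have := h a ((hmemF a).2 hba)
        rw [Finset.mem_compl, hmemF] at this
        apply this
        rw [← hcontra, hba]
      · by_cases hfa : β (α a) = α a
        · exact hba (α.injective (by rw [hcontra, hfa]))
        · -- both a and α a not fixed
          have haF : a ∉ F := fun hx => hba ((hmemF a).1 hx)
          have haaF : α a ∉ F := fun hx => hfa ((hmemF _).1 hx)
          have h1 : α a ∈ Fᶜ \ F.image α := hT a haF haaF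
          have hbaF : β a ∉ F := hβM a haF
          have h2 : α (β a) ∉ F := by
            rw [hcontra]
            exact hβM _ haaF
          have h3 : α (β a) ∈ Fᶜ \ F.image α := hT (β a) hbaF h2
          have : α (β a) = α a :=
            Finset.card_le_one.1 (le_of_eq hT1) _ h3 _ h1
          exact hba (α.injective this)
  unfold kcomm
  have : (Finset.univ.filter fun α : Equiv.Perm (Fin (2 * m - 1)) =>
      hamming (α * β) (β * α) = 2 * m - 1)
      = Finset.univ.filter fun α => ∀ x ∈ F, α x ∈ Fᶜ := by
    ext α
    simp only [Finset.mem_filter, Finset.mem_univ, true_and]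
    exact hiff α
  rw [this, count_mapsTo, hβ]
  have h1 : 2 * m - 1 - (m - 1) = m := by omega
  rw [h1]
  have h2 : Nat.descFactorial m (m - 1) = Nat.factorial m := by
    have h3 : Nat.descFactorial m ((m - 1) + 1)
        = (m - (m - 1)) * Nat.descFactorial m (m - 1) := Nat.descFactorial_succ m (m - 1)
    rw [show (m - 1) + 1 = m by omega, Nat.descFactorial_self,
      show m - (m - 1) = 1 by omega, one_mul] at h3
    exact h3.symm
  rw [h2, sq]
end

section
/- Let β be an n-cycle in S_n. Then for every integer k with 1 ≤ k ≤ n, the number of permutations α ∈ S_n with H(αβ, βα) ≤ k satisfies c(≤k, β) ≤ n·C(n,k)·(k−1)! − n·C(n,k) + n, where C(a,b) denotes the binomial coefficient. -/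
/-- `cle k β` is the number of permutations `α` with `H(αβ, βα) ≤ k`. -/
def cle {n : ℕ} (k : ℕ) (β : Equiv.Perm (Fin n)) : ℕ :=
  (Finset.univ.filter fun α : Equiv.Perm (Fin n) =>
    hamming (α * β) (β * α) ≤ k).card

set_option linter.unusedVariables false

open Equiv Finset

variable {n : ℕ} {β : Equiv.Perm (Fin n)}

lemma two_le_n (hcyc : β.IsCycle) (hsupp : β.support = Finset.univ) : 2 ≤ n := by
  have h := hcyc.two_le_card_support
  rwa [hsupp, Finset.card_univ, Fintype.card_fin] at h

lemma order_n (hcyc : β.IsCycle) (hsupp : β.support = Finset.univ) : orderOf β = n := by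
  rw [hcyc.orderOf, hsupp, Finset.card_univ, Fintype.card_fin]

lemma pow_n_eq (hcyc : β.IsCycle) (hsupp : β.support = Finset.univ) : β ^ n = 1 := by
  have := pow_orderOf_eq_one β
  rwa [order_n hcyc hsupp] at this

lemma reach (hcyc : β.IsCycle) (hsupp : β.support = Finset.univ) (a b : Fin n) :
    ∃ m, (β ^ (m + 1)) a = b := by
  have ha : β a ≠ a := by
    rw [← Equiv.Perm.mem_support, hsupp]; exact Finset.mem_univ a
  have hb : β b ≠ b := by
    rw [← Equiv.Perm.mem_support, hsupp]; exact Finset.mem_univ b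
  obtain ⟨i, hi⟩ := hcyc.exists_pow_eq ha hb
  match i, hi with
  | 0, hi =>
    refine ⟨n - 1, ?_⟩
    have h2 := two_le_n hcyc hsupp
    have he : n - 1 + 1 = n := by omega
    rw [he, pow_n_eq hcyc hsupp]
    simpa using hi
  | (m+1), hi => exact ⟨m, hi⟩

section Arc

variable {T : Finset (Fin n)}

lemma exEll (hcyc : β.IsCycle) (hsupp : β.support = Finset.univ) (hT : T.Nonempty)
    (a : Fin n) : ∃ m, (β ^ (m + 1)) a ∈ T := by
  obtain ⟨t, ht⟩ := hT
  obtain ⟨m, hm⟩ := reach hcyc hsupp a t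
  exact ⟨m, hm ▸ ht⟩

/-- `ell a` : the least `j ≥ 1` with `β^j a ∈ T`. -/
def ell (hcyc : β.IsCycle) (hsupp : β.support = Finset.univ) (hT : T.Nonempty)
    (a : Fin n) : ℕ := Nat.find (exEll hcyc hsupp hT a) + 1

variable (hcyc : β.IsCycle) (hsupp : β.support = Finset.univ) (hT : T.Nonempty)

lemma ell_pos (a : Fin n) : 1 ≤ ell hcyc hsupp hT a := Nat.succ_le_succ (Nat.zero_le _)

lemma ell_hits (a : Fin n) : (β ^ (ell hcyc hsupp hT a)) a ∈ T := Nat.find_spec (exEll hcyc hsupp hT a)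

lemma ell_min {a : Fin n} {j : ℕ} (h1 : 1 ≤ j) (h2 : j < ell hcyc hsupp hT a) :
    (β ^ j) a ∉ T := by
  obtain ⟨m, rfl⟩ : ∃ m, j = m + 1 := ⟨j - 1, by omega⟩
  exact Nat.find_min (exEll hcyc hsupp hT a) (by unfold ell at h2; omega)

variable {α : Equiv.Perm (Fin n)}

lemma prop_arc (hα : ∀ a ∉ T, α (β a) = β (α a)) (a : Fin n) :
    ∀ j, j + 1 ≤ ell hcyc hsupp hT a → α ((β ^ (j + 1)) a) = (β ^ j) (α (β a)) := by
  intro j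
  induction j with
  | zero => intro _; simp
  | succ j ih =>
    intro h
    have hnot : (β ^ (j + 1)) a ∉ T := ell_min hcyc hsupp hT (by omega) (by omega)
    have h1 : (β ^ (j + 1 + 1)) a = β ((β ^ (j + 1)) a) := by
      rw [pow_succ']; rfl
    have h2 : (β ^ (j + 1)) (α (β a)) = β ((β ^ j) (α (β a))) := by
      rw [pow_succ']; rfl
    rw [h1, hα _ hnot, ih (by omega), h2]

lemma cover (a : Fin n) :
    ∃ t ∈ T, ∃ j, j + 1 ≤ ell hcyc hsupp hT t ∧ (β ^ (j + 1)) t = a := by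
  have hex : ∃ m, (β ^ (m + 1)).symm a ∈ T := by
    obtain ⟨t, ht⟩ := hT
    obtain ⟨m, hm⟩ := reach hcyc hsupp t a
    exact ⟨m, by rw [← hm, Equiv.symm_apply_apply]; exact ht⟩
  set m₀ := Nat.find hex with hm₀
  set t := (β ^ (m₀ + 1)).symm a with htdef
  have ht : t ∈ T := Nat.find_spec hex
  have hba : (β ^ (m₀ + 1)) t = a := Equiv.apply_symm_apply _ _
  refine ⟨t, ht, m₀, ?_, hba⟩
  by_contra hcon
  push_neg at hcon
  set L := ell hcyc hsupp hT t with hLdef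
  have hL1 : 1 ≤ L := ell_pos hcyc hsupp hT t
  have key : (β ^ ((m₀ - L) + 1)).symm a ∈ T := by
    have hc : (β ^ ((m₀ - L) + 1)) ((β ^ L) t) = a := by
      rw [← Equiv.Perm.mul_apply, ← pow_add]
      have he : (m₀ - L) + 1 + L = m₀ + 1 := by omega
      rw [he]; exact hba
    rw [← hc, Equiv.symm_apply_apply]
    exact ell_hits hcyc hsupp hT t
  exact absurd key (Nat.find_min hex (by omega))

end Arc

section Tau

variable {T : Finset (Fin n)}

/-- the conjugation-like map. -/
def gf (β α : Equiv.Perm (Fin n)) (a : Fin n) : Fin n := β.symm (α.symm (β (α a)))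

lemma gf_spec (α : Equiv.Perm (Fin n)) (a : Fin n) : α (β (gf β α a)) = β (α a) := by
  simp [gf]

lemma gf_inj {α : Equiv.Perm (Fin n)} {a b : Fin n} (h : gf β α a = gf β α b) : a = b := by
  simpa [gf] using h

variable (hcyc : β.IsCycle) (hsupp : β.support = Finset.univ) (hT : T.Nonempty)
variable {α : Equiv.Perm (Fin n)}

lemma gf_mem (hα : ∀ a ∉ T, α (β a) = β (α a)) {a : Fin n} (ha : a ∈ T) :
    gf β α a ∈ T := by
  by_contra h
  have h2 := hα _ h
  rw [gf_spec] at h2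
  have h3 : α (gf β α a) = α a := β.injective h2.symm
  have : gf β α a = a := α.injective h3
  exact h (this.symm ▸ ha)

/-- successor arc map on `T`. -/
def tau (hcyc : β.IsCycle) (hsupp : β.support = Finset.univ) (hT : T.Nonempty)
    (α : Equiv.Perm (Fin n)) (t : Fin n) : Fin n :=
  gf β α ((β ^ (ell hcyc hsupp hT t)) t)

lemma tau_mem (hα : ∀ a ∉ T, α (β a) = β (α a)) {t : Fin n} (_ : t ∈ T) :
    tau hcyc hsupp hT α t ∈ T :=
  gf_mem hα (ell_hits hcyc hsupp hT t)

lemma tau_rec (hα : ∀ a ∉ T, α (β a) = β (α a)) (t : Fin n) :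
    α (β (tau hcyc hsupp hT α t)) = (β ^ (ell hcyc hsupp hT t)) (α (β t)) := by
  rw [tau, gf_spec]
  set L := ell hcyc hsupp hT t with hL
  have hL1 : 1 ≤ L := ell_pos hcyc hsupp hT t
  have hp := prop_arc hcyc hsupp hT hα t (L - 1) (by omega)
  have he : L - 1 + 1 = L := by omega
  rw [he] at hp
  rw [hp]
  have h2 : (β ^ L) (α (β t)) = β ((β ^ (L - 1)) (α (β t))) := by
    conv_lhs => rw [← he, pow_succ']
    rfl
  rw [h2]

lemma tau_injOn (hα : ∀ a ∉ T, α (β a) = β (α a)) :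
    ∀ t ∈ T, ∀ t' ∈ T, tau hcyc hsupp hT α t = tau hcyc hsupp hT α t' → t = t' := by
  have aux : ∀ t ∈ T, ∀ t' ∈ T,
      ell hcyc hsupp hT t ≤ ell hcyc hsupp hT t' →
      (β ^ (ell hcyc hsupp hT t)) t = (β ^ (ell hcyc hsupp hT t')) t' → t = t' := by
    intro t ht t' ht' hle heq
    set L := ell hcyc hsupp hT t
    set L' := ell hcyc hsupp hT t'
    have hL1 : 1 ≤ L := ell_pos hcyc hsupp hT t
    have hstep : t = (β ^ (L' - L)) t' := by
      apply (β ^ L).injective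
      rw [heq, ← Equiv.Perm.mul_apply, ← pow_add]
      have he : L + (L' - L) = L' := by omega
      rw [he]
    rcases Nat.eq_zero_or_pos (L' - L) with h0 | h1
    · rw [h0] at hstep; simpa using hstep
    · exfalso
      have hlt : L' - L < L' := by omega
      exact ell_min hcyc hsupp hT h1 hlt (hstep ▸ ht)
  intro t ht t' ht' h
  have h2 : (β ^ (ell hcyc hsupp hT t)) t = (β ^ (ell hcyc hsupp hT t')) t' := gf_inj h
  rcases le_total (ell hcyc hsupp hT t) (ell hcyc hsupp hT t') with hle | hle
  · exact aux t ht t' ht' hle h2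
  · exact (aux t' ht' t ht hle h2.symm).symm

end Tau

section Seq

variable {T : Finset (Fin n)}
variable (hcyc : β.IsCycle) (hsupp : β.support = Finset.univ) (hT : T.Nonempty)

/-- iterate of `tau` starting at `t₀`. -/
def seqf (hcyc : β.IsCycle) (hsupp : β.support = Finset.univ) (hT : T.Nonempty)
    (α : Equiv.Perm (Fin n)) (t₀ : Fin n) (i : ℕ) : Fin n :=
  (tau hcyc hsupp hT α)^[i] t₀

variable {α : Equiv.Perm (Fin n)} {t₀ : Fin n}

lemma seq_zero : seqf hcyc hsupp hT α t₀ 0 = t₀ := rfl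

lemma seq_succ (i : ℕ) :
    seqf hcyc hsupp hT α t₀ (i + 1) = tau hcyc hsupp hT α (seqf hcyc hsupp hT α t₀ i) :=
  Function.iterate_succ_apply' _ _ _

lemma seq_mem (hα : ∀ a ∉ T, α (β a) = β (α a)) (ht₀ : t₀ ∈ T) (i : ℕ) :
    seqf hcyc hsupp hT α t₀ i ∈ T := by
  induction i with
  | zero => exact ht₀
  | succ i ih => rw [seq_succ]; exact tau_mem hcyc hsupp hT hα ih

lemma seq_surj (hα : ∀ a ∉ T, α (β a) = β (α a)) (ht₀ : t₀ ∈ T) :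
    ∀ s ∈ T, ∃ i, seqf hcyc hsupp hT α t₀ i = s := by
  set V : Set (Fin n) := {x | ∃ s ∈ T, (∃ i, seqf hcyc hsupp hT α t₀ i = s) ∧
    ∃ j, j + 1 ≤ ell hcyc hsupp hT s ∧ x = (β ^ j) (α (β s))} with hV
  have hcl : ∀ x ∈ V, β x ∈ V := by
    rintro x ⟨s, hs, hseq, j, hj, rfl⟩
    have hx : β ((β ^ j) (α (β s))) = (β ^ (j + 1)) (α (β s)) := by
      rw [pow_succ']; rfl
    by_cases h : j + 2 ≤ ell hcyc hsupp hT s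
    · exact ⟨s, hs, hseq, j + 1, h, hx⟩
    · have hj1 : j + 1 = ell hcyc hsupp hT s := by omega
      refine ⟨tau hcyc hsupp hT α s, tau_mem hcyc hsupp hT hα hs, ?_, 0,
        ell_pos hcyc hsupp hT _, ?_⟩
      · obtain ⟨i, hi⟩ := hseq
        exact ⟨i + 1, by rw [seq_succ, hi]⟩
      · rw [pow_zero, hx, hj1, tau_rec hcyc hsupp hT hα]
        rfl
  have h0 : α (β t₀) ∈ V :=
    ⟨t₀, ht₀, ⟨0, rfl⟩, 0, ell_pos hcyc hsupp hT _, by simp⟩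
  have hall : ∀ m, (β ^ m) (α (β t₀)) ∈ V := by
    intro m
    induction m with
    | zero => simpa using h0
    | succ m ih =>
      have : (β ^ (m + 1)) (α (β t₀)) = β ((β ^ m) (α (β t₀))) := by rw [pow_succ']; rfl
      rw [this]; exact hcl _ ih
  have huniv : ∀ x, x ∈ V := by
    intro x
    obtain ⟨m, hm⟩ := reach hcyc hsupp (α (β t₀)) x
    exact hm ▸ hall (m + 1)
  intro s hs
  obtain ⟨s', hs', ⟨i, hi⟩, j, hj, hx⟩ := huniv (α (β s))
  have h1 : α (β s) = α ((β ^ (j + 1)) s') := by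
    rw [prop_arc hcyc hsupp hT hα s' j hj]; exact hx
  have hbs : β s = (β ^ (j + 1)) s' := α.injective h1
  have hs_eq : s = (β ^ j) s' := by
    apply β.injective
    rw [hbs, pow_succ']; rfl
  rcases Nat.eq_zero_or_pos j with rfl | hj1
  · refine ⟨i, ?_⟩
    rw [hi]
    rw [hs_eq]; simp
  · exact absurd (hs_eq ▸ hs) (ell_min hcyc hsupp hT hj1 (by omega))

lemma seq_cancel (hα : ∀ a ∉ T, α (β a) = β (α a)) (ht₀ : t₀ ∈ T) :
    ∀ a i j, seqf hcyc hsupp hT α t₀ (i + a) = seqf hcyc hsupp hT α t₀ (j + a) →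
      seqf hcyc hsupp hT α t₀ i = seqf hcyc hsupp hT α t₀ j := by
  intro a
  induction a with
  | zero => intro i j h; simpa using h
  | succ a ih =>
    intro i j h
    apply ih
    have h1 : i + (a + 1) = (i + a) + 1 := by omega
    have h2 : j + (a + 1) = (j + a) + 1 := by omega
    rw [h1, h2, seq_succ, seq_succ] at h
    exact tau_injOn hcyc hsupp hT hα _ (seq_mem hcyc hsupp hT hα ht₀ _) _
      (seq_mem hcyc hsupp hT hα ht₀ _) h

lemma seq_period (d : ℕ) (hd : seqf hcyc hsupp hT α t₀ d = seqf hcyc hsupp hT α t₀ 0) :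
    ∀ i, seqf hcyc hsupp hT α t₀ (i + d) = seqf hcyc hsupp hT α t₀ i := by
  intro i
  induction i with
  | zero => simpa using hd
  | succ i ih =>
    have h1 : i + 1 + d = (i + d) + 1 := by omega
    rw [h1, seq_succ, seq_succ, ih]

lemma seq_mod {d : ℕ} (hd0 : 0 < d)
    (hd : seqf hcyc hsupp hT α t₀ d = seqf hcyc hsupp hT α t₀ 0) (i : ℕ) :
    seqf hcyc hsupp hT α t₀ i = seqf hcyc hsupp hT α t₀ (i % d) := by
  induction i using Nat.strong_induction_on with
  | _ i ih =>
    by_cases h : i < d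
    · rw [Nat.mod_eq_of_lt h]
    · have h1 : i = (i - d) + d := by omega
      have h2 : seqf hcyc hsupp hT α t₀ i = seqf hcyc hsupp hT α t₀ (i - d) := by
        conv_lhs => rw [h1]
        exact seq_period hcyc hsupp hT d hd _
      rw [h2, ih (i - d) (by omega)]
      congr 1
      conv_rhs => rw [h1]
      rw [Nat.add_mod_right]

lemma seq_inj (hα : ∀ a ∉ T, α (β a) = β (α a)) (ht₀ : t₀ ∈ T) :
    ∀ a b, a < T.card → b < T.card →
      seqf hcyc hsupp hT α t₀ a = seqf hcyc hsupp hT α t₀ b → a = b := by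
  suffices h : ∀ a b, a ≤ b → b < T.card →
      seqf hcyc hsupp hT α t₀ a = seqf hcyc hsupp hT α t₀ b → a = b by
    intro a b ha hb heq
    rcases le_total a b with hle | hle
    · exact h a b hle hb heq
    · exact (h b a hle ha heq.symm).symm
  intro a b hab hb heq
  by_contra hne
  set d := b - a with hddef
  have hd0 : 0 < d := by omega
  have h0 : seqf hcyc hsupp hT α t₀ d = seqf hcyc hsupp hT α t₀ 0 := by
    apply seq_cancel hcyc hsupp hT hα ht₀ a
    have he : d + a = b := by omega
    rw [he, Nat.zero_add]
    exact heq.symm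
  have himg : T ⊆ Finset.image (fun i => seqf hcyc hsupp hT α t₀ i) (Finset.range d) := by
    intro s hs
    obtain ⟨i, hi⟩ := seq_surj hcyc hsupp hT hα ht₀ s hs
    refine Finset.mem_image.mpr ⟨i % d, Finset.mem_range.mpr (Nat.mod_lt _ hd0), ?_⟩
    rw [← seq_mod hcyc hsupp hT hd0 h0 i, hi]
  have hcard := Finset.card_le_card himg
  have hcard2 : (Finset.image (fun i => seqf hcyc hsupp hT α t₀ i) (Finset.range d)).card ≤ d :=
    le_trans Finset.card_image_le (by simp)
  omega

end Seq

set_option maxHeartbeats 1000000 in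
lemma key_count (hcyc : β.IsCycle) (hsupp : β.support = Finset.univ) (T : Finset (Fin n))
    (hk : 1 ≤ T.card)
    [DecidablePred fun α : Equiv.Perm (Fin n) => ∀ a ∉ T, α (β a) = β (α a)] :
    (Finset.univ.filter fun α : Equiv.Perm (Fin n) => ∀ a ∉ T, α (β a) = β (α a)).card
      ≤ n * Nat.factorial (T.card - 1) := by
  have hT : T.Nonempty := Finset.card_pos.mp (by omega)
  obtain ⟨t₀, ht₀⟩ := hT.exists_mem
  have hT : T.Nonempty := ⟨t₀, ht₀⟩
  have hF : ∀ A : ↥(Finset.univ.filter fun α : Equiv.Perm (Fin n) => ∀ a ∉ T, α (β a) = β (α a)),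
      ∀ a ∉ T, A.1 (β a) = β (A.1 a) := fun A => (Finset.mem_filter.mp A.2).2
  have hmem_erase : ∀ (α : Equiv.Perm (Fin n)) (hα : ∀ a ∉ T, α (β a) = β (α a))
      (i : ℕ), i + 1 < T.card → seqf hcyc hsupp hT α t₀ (i + 1) ∈ T.erase t₀ := by
    intro α hα i hi
    rw [Finset.mem_erase]
    refine ⟨?_, seq_mem hcyc hsupp hT hα ht₀ _⟩
    intro hEq
    have h0 : seqf hcyc hsupp hT α t₀ (i + 1) = seqf hcyc hsupp hT α t₀ 0 := hEq
    have := seq_inj hcyc hsupp hT hα ht₀ (i + 1) 0 hi (by omega) h0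
    omega
  have hcardle : Fintype.card ↥(Finset.univ.filter fun α : Equiv.Perm (Fin n) => ∀ a ∉ T, α (β a) = β (α a))
      ≤ Fintype.card (Fin n × (Fin (T.card - 1) ↪ {x // x ∈ T.erase t₀})) := by
    apply Fintype.card_le_of_injective
      (fun A => (A.1 (β t₀),
        ⟨fun i => ⟨seqf hcyc hsupp hT A.1 t₀ (i.1 + 1),
          hmem_erase A.1 (hF A) i.1 (by have := i.isLt; omega)⟩, by
          intro i j hij
          have h1 : seqf hcyc hsupp hT A.1 t₀ (i.1 + 1)
              = seqf hcyc hsupp hT A.1 t₀ (j.1 + 1) := congrArg Subtype.val hij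
          have h2 := seq_inj hcyc hsupp hT (hF A) ht₀ (i.1 + 1) (j.1 + 1)
            (by have := i.isLt; omega) (by have := j.isLt; omega) h1
          exact Fin.ext (by omega)⟩))
    intro A A' heq
    have h1 : A.1 (β t₀) = A'.1 (β t₀) := congrArg Prod.fst heq
    have h2 := congrArg Prod.snd heq
    simp only at h2
    have hseqpt : ∀ i : Fin (T.card - 1),
        seqf hcyc hsupp hT A.1 t₀ (i.1 + 1) = seqf hcyc hsupp hT A'.1 t₀ (i.1 + 1) := by
      intro i
      have h3 := DFunLike.congr_fun h2 i
      exact congrArg Subtype.val h3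
    have hseq : ∀ i, i < T.card →
        seqf hcyc hsupp hT A.1 t₀ i = seqf hcyc hsupp hT A'.1 t₀ i := by
      intro i hi
      match i with
      | 0 => rfl
      | (m + 1) => exact hseqpt ⟨m, by omega⟩
    have hval : ∀ i, i < T.card →
        A.1 (β (seqf hcyc hsupp hT A.1 t₀ i)) = A'.1 (β (seqf hcyc hsupp hT A'.1 t₀ i)) := by
      intro i
      induction i with
      | zero => intro _; exact h1
      | succ i ih =>
        intro hi
        have hii : i < T.card := by omega
        rw [seq_succ, seq_succ, tau_rec hcyc hsupp hT (hF A), tau_rec hcyc hsupp hT (hF A'),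
          ih hii, hseq i hii]
    have himage : Finset.image (fun i => seqf hcyc hsupp hT A.1 t₀ i)
        (Finset.range T.card) = T := by
      apply Finset.eq_of_subset_of_card_le
      · intro x hx
        obtain ⟨i, hi, rfl⟩ := Finset.mem_image.mp hx
        exact seq_mem hcyc hsupp hT (hF A) ht₀ i
      · rw [Finset.card_image_of_injOn]
        · simp
        · intro i hi j hj hij
          exact seq_inj hcyc hsupp hT (hF A) ht₀ i j
            (Finset.mem_range.mp (Finset.mem_coe.mp hi))
            (Finset.mem_range.mp (Finset.mem_coe.mp hj)) hij
    have hTval : ∀ s ∈ T, A.1 (β s) = A'.1 (β s) := by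
      intro s hs
      rw [← himage] at hs
      obtain ⟨i, hi, rfl⟩ := Finset.mem_image.mp hs
      have hik := Finset.mem_range.mp hi
      have hv := hval i hik
      rw [← hseq i hik] at hv
      exact hv
    apply Subtype.ext
    apply Equiv.ext
    intro a
    obtain ⟨t, ht, j, hj, hta⟩ := cover hcyc hsupp hT a
    rw [← hta, prop_arc hcyc hsupp hT (hF A) t j hj, prop_arc hcyc hsupp hT (hF A') t j hj,
      hTval t ht]
  rw [← Fintype.card_coe]
  refine le_trans hcardle ?_
  rw [Fintype.card_prod, Fintype.card_fin, Fintype.card_embedding_eq, Fintype.card_coe,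
    Fintype.card_fin, Finset.card_erase_of_mem ht₀, Nat.descFactorial_self]

lemma cent_le (hcyc : β.IsCycle) (hsupp : β.support = Finset.univ) :
    (Finset.univ.filter fun α : Equiv.Perm (Fin n) => ∀ x, α (β x) = β (α x)).card ≤ n := by
  have h2 : 2 ≤ n := two_le_n hcyc hsupp
  have x₀ : Fin n := ⟨0, by omega⟩
  have hpow : ∀ (γ : Equiv.Perm (Fin n)), (∀ x, γ (β x) = β (γ x)) →
      ∀ m x, γ ((β ^ m) x) = (β ^ m) (γ x) := by
    intro γ hγ m
    induction m with
    | zero => intro x; simp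
    | succ m ih =>
      intro x
      have h1 : (β ^ (m + 1)) x = β ((β ^ m) x) := by rw [pow_succ']; rfl
      have h2 : (β ^ (m + 1)) (γ x) = β ((β ^ m) (γ x)) := by rw [pow_succ']; rfl
      rw [h1, h2, hγ, ih]
  have hinj : Set.InjOn (fun α : Equiv.Perm (Fin n) => α x₀)
      ↑(Finset.univ.filter fun α : Equiv.Perm (Fin n) => ∀ x, α (β x) = β (α x)) := by
    intro α hα α' hα' heq
    simp only [Finset.coe_filter, Set.mem_setOf_eq, Finset.mem_univ, true_and] at hα hα'
    apply Equiv.ext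
    intro a
    obtain ⟨m, hm⟩ := reach hcyc hsupp x₀ a
    simp only at heq
    rw [← hm, hpow α hα, hpow α' hα', heq]
  have := Finset.card_le_card_of_injOn (fun α : Equiv.Perm (Fin n) => α x₀)
    (fun _ _ => Finset.mem_univ _) hinj
  simpa [Finset.card_univ] using this

lemma cent_ge (hcyc : β.IsCycle) (hsupp : β.support = Finset.univ) :
    n ≤ (Finset.univ.filter fun α : Equiv.Perm (Fin n) => ∀ x, α (β x) = β (α x)).card := by
  have hmaps : ∀ i : Fin n, (β ^ (i : ℕ)) ∈
      (Finset.univ.filter fun α : Equiv.Perm (Fin n) => ∀ x, α (β x) = β (α x)) := by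
    intro i
    refine Finset.mem_filter.mpr ⟨Finset.mem_univ _, fun x => ?_⟩
    have hc : β ^ (i : ℕ) * β = β * β ^ (i : ℕ) := (Commute.refl β).pow_left _
    rw [← Equiv.Perm.mul_apply, hc, Equiv.Perm.mul_apply]
  have hinj : Set.InjOn (fun i : Fin n => β ^ (i : ℕ)) ↑(Finset.univ : Finset (Fin n)) := by
    intro i _ j _ heq
    have h1 : (i : ℕ) ∈ Set.Iio (orderOf β) := by rw [order_n hcyc hsupp]; exact i.isLt
    have h2 : (j : ℕ) ∈ Set.Iio (orderOf β) := by rw [order_n hcyc hsupp]; exact j.isLt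
    exact Fin.ext (pow_injOn_Iio_orderOf h1 h2 heq)
  have := Finset.card_le_card_of_injOn (fun i : Fin n => β ^ (i : ℕ))
    (fun i _ => hmaps i) hinj
  simpa [Finset.card_univ] using this


theorem cle_upper_bound_n_cycle (n : ℕ) (β : Equiv.Perm (Fin n))
    (hβ : β.IsCycle ∧ β.support.card = n) :
    ∀ k : ℕ, 1 ≤ k → k ≤ n →
      cle k β ≤ n * Nat.choose n k * Nat.factorial (k - 1) - n * Nat.choose n k + n := by
  obtain ⟨hcyc, hcard⟩ := hβ
  have hsupp : β.support = Finset.univ :=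
    Finset.eq_univ_of_card _ (by rw [hcard, Fintype.card_fin])
  intro k hk1 hkn
  set Cc := Finset.univ.filter (fun α : Equiv.Perm (Fin n) => ∀ x, α (β x) = β (α x)) with hCc
  set A := Finset.univ.filter
    (fun α : Equiv.Perm (Fin n) => hamming (α * β) (β * α) ≤ k) with hA
  have hcle : cle k β = A.card := rfl
  have hsplit : A.card = (A ∩ Cc).card + (A \ Cc).card :=
    (Finset.card_inter_add_card_sdiff A Cc).symm
  have hACc : (A ∩ Cc).card ≤ n :=
    le_trans (Finset.card_le_card Finset.inter_subset_right) (cent_le hcyc hsupp)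
  have hsub : (A \ Cc) ⊆ (Finset.powersetCard k (Finset.univ : Finset (Fin n))).biUnion
      (fun T => Finset.univ.filter fun α : Equiv.Perm (Fin n) =>
        (∀ a ∉ T, α (β a) = β (α a)) ∧ ¬(∀ x, α (β x) = β (α x))) := by
    intro α hαm
    rw [Finset.mem_sdiff] at hαm
    obtain ⟨hαA, hαC⟩ := hαm
    rw [hA, Finset.mem_filter] at hαA
    have hham : (Finset.univ.filter fun a : Fin n => (α * β) a ≠ (β * α) a).card ≤ k := hαA.2
    obtain ⟨T, hDT, hTu, hTc⟩ := Finset.exists_subsuperset_card_eq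
      (Finset.subset_univ _) hham (by rw [Finset.card_univ, Fintype.card_fin]; exact hkn)
    refine Finset.mem_biUnion.mpr ⟨T, Finset.mem_powersetCard.mpr ⟨hTu, hTc⟩, ?_⟩
    rw [Finset.mem_filter]
    refine ⟨Finset.mem_univ _, ?_, ?_⟩
    · intro a haT
      by_contra hne
      have hmemD : a ∈ Finset.univ.filter fun a : Fin n => (α * β) a ≠ (β * α) a := by
        simp only [Finset.mem_filter, Finset.mem_univ, true_and]
        simpa [Equiv.Perm.mul_apply] using hne
      exact haT (hDT hmemD)
    · intro hcomm
      exact hαC (by rw [hCc, Finset.mem_filter]; exact ⟨Finset.mem_univ _, hcomm⟩)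
  have hper : ∀ T ∈ Finset.powersetCard k (Finset.univ : Finset (Fin n)),
      (Finset.univ.filter fun α : Equiv.Perm (Fin n) =>
        (∀ a ∉ T, α (β a) = β (α a)) ∧ ¬(∀ x, α (β x) = β (α x))).card
        ≤ n * Nat.factorial (k - 1) - n := by
    intro T hT
    obtain ⟨hTu, hTc⟩ := Finset.mem_powersetCard.mp hT
    have heqset : (Finset.univ.filter fun α : Equiv.Perm (Fin n) =>
        (∀ a ∉ T, α (β a) = β (α a)) ∧ ¬(∀ x, α (β x) = β (α x)))
        = (Finset.univ.filter fun α : Equiv.Perm (Fin n) =>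
          (∀ a ∉ T, α (β a) = β (α a))) \ Cc := by
      ext α
      simp only [Finset.mem_filter, Finset.mem_sdiff, Finset.mem_univ, true_and, hCc]
    rw [heqset]
    have hCsub : Cc ⊆ Finset.univ.filter fun α : Equiv.Perm (Fin n) =>
        (∀ a ∉ T, α (β a) = β (α a)) := by
      intro α hαm
      rw [hCc, Finset.mem_filter] at hαm
      exact Finset.mem_filter.mpr ⟨Finset.mem_univ _, fun a _ => hαm.2 a⟩
    rw [Finset.card_sdiff_of_subset hCsub]
    have h1 := key_count hcyc hsupp T (by omega)
    have h2 := cent_ge hcyc hsupp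
    rw [hTc] at h1
    exact tsub_le_tsub h1 h2
  have h3 : (A \ Cc).card ≤ n.choose k * (n * Nat.factorial (k - 1) - n) := by
    refine le_trans (Finset.card_le_card hsub) ?_
    refine le_trans (Finset.card_biUnion_le) ?_
    refine le_trans (Finset.sum_le_sum hper) ?_
    rw [Finset.sum_const, smul_eq_mul, Finset.card_powersetCard, Finset.card_univ,
      Fintype.card_fin]
  have hmain : A.card ≤ n + n.choose k * (n * Nat.factorial (k - 1) - n) := by
    rw [hsplit]
    exact add_le_add hACc h3
  have hfac : n ≤ n * Nat.factorial (k - 1) :=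
    Nat.le_mul_of_pos_right n (Nat.factorial_pos _)
  have hdist : n.choose k * (n * Nat.factorial (k - 1) - n) + n.choose k * n
      = n.choose k * (n * Nat.factorial (k - 1)) := by
    rw [← Nat.mul_add, Nat.sub_add_cancel hfac]
  have hz : n.choose k * (n * Nat.factorial (k - 1) - n)
      = n.choose k * (n * Nat.factorial (k - 1)) - n.choose k * n :=
    Nat.eq_sub_of_add_eq hdist
  have hcomm1 : n * Nat.choose n k * Nat.factorial (k - 1)
      = n.choose k * (n * Nat.factorial (k - 1)) := by ring
  have hcomm2 : n * Nat.choose n k = n.choose k * n := by ring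
  rw [hcle, hcomm1, hcomm2]
  calc A.card ≤ n + n.choose k * (n * Nat.factorial (k - 1) - n) := hmain
    _ = n.choose k * (n * Nat.factorial (k - 1)) - n.choose k * n + n := by
        rw [hz, Nat.add_comm]
end
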